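/- arXiv:0907.0243 — 11 statements merged into one kernel-verified Lean document; each statement's English description precedes it below -/
import Mathlib

section
/- For all positive integers M, N and real numbers a, b, the alternating sum ∑_{t=0}^{N} (-1)^t ((a t + b)/(t + M)) C(N, t) equals (b/M − a) · C(M+N, M)^{-1}. -/
open Finset

lemma key : ∀ (N M : ℕ), 0 < M →
    ∑ t ∈ range (N + 1), (-1 : ℝ) ^ t * (N.choose t) / (t + M) =
      ((M : ℝ) * ((M + N).choose M : ℝ))⁻¹ := by
  intro N
  induction N with
  | zero =>
    intro M hM
    simp
  | succ N ih =>
    intro M hM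
    have hrec : ∑ t ∈ range (N + 2), (-1:ℝ)^t * ((N+1).choose t) / (t + M)
        = ∑ t ∈ range (N+1), (-1:ℝ)^t * (N.choose t)/(t+M)
          - ∑ t ∈ range (N+1), (-1:ℝ)^t * (N.choose t)/(t+(M+1:ℕ)) := by
      rw [Finset.sum_range_succ' _ (N+1), Finset.sum_range_succ' (fun t => (-1:ℝ)^t * (N.choose t)/(t+M)) N]
      have h1 : ∀ i ∈ range (N+1),
          (-1:ℝ)^(i+1) * ((N+1).choose (i+1)) / ((i+1 : ℕ) + M)
          = (-1:ℝ)^(i+1) * (N.choose (i+1)) / ((i+1:ℕ)+M)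
            - (-1:ℝ)^i * (N.choose i)/((i:ℕ)+(M+1:ℕ)) := by
        intro i _
        rw [Nat.choose_succ_succ]
        push_cast
        ring
      rw [Finset.sum_congr rfl h1, Finset.sum_sub_distrib]
      have h2 : ∑ i ∈ range (N+1), (-1:ℝ)^(i+1) * (N.choose (i+1)) / ((i+1:ℕ)+M)
          = ∑ i ∈ range N, (-1:ℝ)^(i+1) * (N.choose (i+1)) / ((i+1:ℕ)+M) := by
        rw [Finset.sum_range_succ, Nat.choose_succ_self]
        simp
      rw [h2]
      simp only [Nat.choose_zero_right]
      push_cast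
      ring
    rw [hrec, ih M hM, ih (M+1) (by omega)]
    have e1 : (M+N+1) * (M+N).choose M = (M+N+1).choose (M+1) * (M+1) := by
      simpa [Nat.succ_eq_add_one] using Nat.add_one_mul_choose_eq (M+N) M
    have e2 : (M+N+1) * (M+N).choose M = (M+N+1).choose M * (N+1) := by
      have h := Nat.add_one_mul_choose_eq (M+N) N
      rw [show (M+N).choose N = (M+N).choose M from
            Nat.choose_symm_of_eq_add (show M+N = N+M by omega),
          show (M+N).succ.choose N.succ = (M+N+1).choose M from
            Nat.choose_symm_of_eq_add (show (M+N).succ = N.succ + M by omega)] at h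
      simpa [Nat.succ_eq_add_one] using h
    have hM' : (0:ℝ) < (M:ℝ) := by exact_mod_cast hM
    have p1 : (0:ℝ) < ((M+N).choose M : ℝ) := by
      exact_mod_cast Nat.choose_pos (by omega)
    have p2 : (0:ℝ) < ((M+N+1).choose (M+1) : ℝ) := by
      exact_mod_cast Nat.choose_pos (by omega)
    have p3 : (0:ℝ) < ((M+N+1).choose M : ℝ) := by
      exact_mod_cast Nat.choose_pos (by omega)
    have e1' : ((M:ℝ)+N+1) * ((M+N).choose M : ℝ) = ((M+N+1).choose (M+1) : ℝ) * (M+1) := by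
      exact_mod_cast congrArg (Nat.cast : ℕ → ℝ) e1
    have e2' : ((M:ℝ)+N+1) * ((M+N).choose M : ℝ) = ((M+N+1).choose M : ℝ) * (N+1) := by
      exact_mod_cast congrArg (Nat.cast : ℕ → ℝ) e2
    have hc2 : ((M+N+1).choose (M+1) : ℝ) = ((M:ℝ)+N+1) * ((M+N).choose M : ℝ) / (M+1) := by
      field_simp
      linarith [e1']
    have hc3 : ((M+N+1).choose M : ℝ) = ((M:ℝ)+N+1) * ((M+N).choose M : ℝ) / (N+1) := by
      field_simp
      linarith [e2']
    rw [show M + (N+1) = M + N + 1 from rfl, show (M+1+N) = M+N+1 by omega]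
    push_cast
    rw [hc2, hc3]
    have hMN : ((M:ℝ)+N+1) ≠ 0 := by positivity
    field_simp
    ring

theorem sum_lemma (M N : ℕ) (hM : 0 < M) (hN : 0 < N) (a b : ℝ) :
    ∑ t ∈ Finset.range (N + 1),
      (-1 : ℝ) ^ t * ((a * t + b) / (t + M)) * (N.choose t) =
    (b / M - a) * (((M + N).choose M : ℝ))⁻¹ := by
  have hM' : (0:ℝ) < (M:ℝ) := by exact_mod_cast hM
  have halt : ∑ t ∈ range (N+1), (-1:ℝ)^t * (N.choose t) = 0 := by
    have h : ((∑ i ∈ range (N+1), (-1:ℤ)^i * N.choose i : ℤ) : ℝ) = 0 := by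
      rw [Int.alternating_sum_range_choose_of_ne hN.ne']
      simp
    push_cast at h
    convert h using 2
  have hsplit : ∀ t ∈ range (N+1), (-1:ℝ)^t * ((a*t+b)/(t+M)) * (N.choose t)
      = a * ((-1:ℝ)^t * (N.choose t)) + (b - a*M) * ((-1:ℝ)^t * (N.choose t)/((t:ℝ)+M)) := by
    intro t _
    have ht : ((t:ℝ)+(M:ℝ)) ≠ 0 := by positivity
    field_simp
    ring
  rw [Finset.sum_congr rfl hsplit, Finset.sum_add_distrib, ← Finset.mul_sum, ← Finset.mul_sum,
    halt, key N M hM, mul_zero, zero_add]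
  have hC : ((M+N).choose M : ℝ) ≠ 0 := by
    have : (0:ℝ) < ((M+N).choose M : ℝ) := by exact_mod_cast Nat.choose_pos (by omega)
    exact this.ne'
  field_simp
end

section
/- For every positive integer M and nonnegative integer N, ∑_{t=0}^{N} (-1)^t (t/(t+M)) C(N, t) C(M+N, M) = −1. -/
open Finset

lemma aux_S (N : ℕ) : ∀ M : ℕ, 0 < M →
    ∑ t ∈ range (N + 1), (-1 : ℝ) ^ t * (N.choose t) / (t + M)
      = (M - 1).factorial * N.factorial / (M + N).factorial := by
  induction N with
  | zero =>
    intro M hM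
    obtain ⟨m, rfl⟩ := Nat.exists_eq_succ_of_ne_zero hM.ne'
    simp [Nat.factorial_succ]
    field_simp
  | succ N ih =>
    intro M hM
    have hstep : ∑ t ∈ range (N + 1 + 1), (-1 : ℝ) ^ t * ((N+1).choose t) / (t + M)
        = (∑ s ∈ range (N + 1), (-1 : ℝ) ^ (s+1) * ((N+1).choose (s+1)) / (↑(s+1) + M))
          + (-1 : ℝ) ^ 0 * ((N+1).choose 0) / ((0:ℕ) + M) := Finset.sum_range_succ' _ _
    have hsplit : ∀ s ∈ range (N + 1),
        (-1 : ℝ) ^ (s+1) * ((N+1).choose (s+1)) / (↑(s+1) + M)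
        = -((-1 : ℝ) ^ s * (N.choose s) / (s + (M+1 : ℕ)))
          + -((-1 : ℝ) ^ s * (N.choose (s+1)) / (↑(s+1) + M)) := by
      intro s hs
      rw [Nat.choose_succ_succ]
      have h1 : ((s:ℝ) + (M+1:ℕ)) ≠ 0 := by positivity
      have h2 : ((↑(s+1):ℝ) + M) ≠ 0 := by positivity
      push_cast at h1 h2 ⊢
      field_simp
      ring
    have hT : ∑ s ∈ range (N + 1), (-1 : ℝ) ^ (s+1) * (N.choose (s+1)) / (↑(s+1) + M)
        = ∑ t ∈ range (N + 1), (-1 : ℝ) ^ t * (N.choose t) / (t + M)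
          - 1 / M := by
      have h := Finset.sum_range_succ'
        (fun t => (-1 : ℝ) ^ t * (N.choose t) / (t + M)) (N + 1)
      have h2 := Finset.sum_range_succ
        (fun t => (-1 : ℝ) ^ t * (N.choose t) / (t + M)) (N + 1)
      simp only [Nat.choose_succ_self] at h2
      rw [h2] at h
      simp at h
      push_cast at h ⊢
      rw [one_div]
      linarith [h]
    rw [hstep, Finset.sum_congr rfl hsplit, Finset.sum_add_distrib]
    rw [Finset.sum_neg_distrib, Finset.sum_neg_distrib]
    have e1 : ∑ s ∈ range (N + 1), (-1 : ℝ) ^ s * (N.choose s) / (s + (M+1 : ℕ))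
        = M.factorial * N.factorial / (M + 1 + N).factorial := by
      have := ih (M + 1) (Nat.succ_pos M)
      simpa using this
    have e2 := ih M hM
    have hneg : ∑ s ∈ range (N + 1), (-1 : ℝ) ^ (s+1) * (N.choose (s+1)) / (↑(s+1) + M)
        = ∑ s ∈ range (N + 1), (-1 : ℝ) * ((-1 : ℝ) ^ s * (N.choose (s+1)) / (↑(s+1) + M)) := by
      apply Finset.sum_congr rfl
      intro s hs
      ring
    have hT' : ∑ s ∈ range (N + 1), (-1 : ℝ) ^ s * (N.choose (s+1)) / (↑(s+1) + M)
        = 1 / M - (∑ t ∈ range (N + 1), (-1 : ℝ) ^ t * (N.choose t) / (t + M)) := by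
      rw [hneg, ← Finset.mul_sum] at hT
      linarith [hT]
    rw [e1, hT', e2]
    obtain ⟨m, rfl⟩ := Nat.exists_eq_succ_of_ne_zero hM.ne'
    have f1 : ((m+1+N).factorial : ℝ) ≠ 0 := Nat.cast_ne_zero.mpr (Nat.factorial_ne_zero _)
    have f2 : ((m:ℝ)+1) ≠ 0 := by positivity
    have f3 : ((m:ℝ)+1+N+1) ≠ 0 := by positivity
    simp only [Nat.succ_eq_add_one, Nat.succ_sub_one, Nat.choose_zero_right]
    rw [show m+1+(N+1) = m+1+N+1 from by ring]
    have r1 : ((m+1).factorial:ℝ) = (m+1)*m.factorial := by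
      rw [Nat.factorial_succ]; push_cast; ring
    have r2 : ((m+1+1+N).factorial:ℝ) = ((m:ℝ)+1+N+1) * (m+1+N).factorial := by
      rw [show m+1+1+N = (m+1+N)+1 from by ring, Nat.factorial_succ]; push_cast; ring
    have r3 : ((m+1+N+1).factorial:ℝ) = ((m:ℝ)+1+N+1)*(m+1+N).factorial := by
      rw [Nat.factorial_succ]; push_cast; ring
    have r4 : ((N+1).factorial:ℝ) = ((N:ℝ)+1)*N.factorial := by
      rw [Nat.factorial_succ]; push_cast; ring
    rw [r1, r2, r3, r4]
    push_cast
    field_simp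
    ring

theorem sum_lemma_t (M N : ℕ) (hM : 0 < M) (hN : 1 ≤ N) :
    ∑ t ∈ Finset.range (N + 1),
      (-1 : ℝ) ^ t * ((t : ℝ) / (t + M)) * (N.choose t) * ((M + N).choose M) = -1 := by
  have hsplit : ∀ t ∈ Finset.range (N+1),
      (-1:ℝ)^t * ((t:ℝ)/(t+M)) * (N.choose t) * ((M+N).choose M)
      = (-1:ℝ)^t * (N.choose t) * ((M+N).choose M)
        - (((M+N).choose M : ℝ) * M) * ((-1:ℝ)^t * (N.choose t) / (t + M)) := by
    intro t ht
    have h : ((t:ℝ) + M) ≠ 0 := by positivity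
    field_simp
    ring
  rw [Finset.sum_congr rfl hsplit, Finset.sum_sub_distrib]
  have h1 : ∑ t ∈ Finset.range (N+1), (-1:ℝ)^t * (N.choose t) * ((M+N).choose M) = 0 := by
    rw [← Finset.sum_mul]
    have key : (∑ t ∈ Finset.range (N+1), (-1:ℤ)^t * N.choose t) = 0 :=
      Int.alternating_sum_range_choose_of_ne (by omega)
    have key2 : ∑ t ∈ Finset.range (N+1), (-1:ℝ)^t * (N.choose t) = 0 := by
      exact_mod_cast congrArg (fun z : ℤ => (z : ℝ)) key
    rw [key2, zero_mul]
  rw [h1, ← Finset.mul_sum, aux_S N M hM]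
  have hfac : ((M+N).choose M : ℝ) * M * ((M-1).factorial * N.factorial) = ((M+N).factorial : ℝ) := by
    obtain ⟨m, rfl⟩ := Nat.exists_eq_succ_of_ne_zero hM.ne'
    have hnat : (m+1+N).choose (m+1) * (m+1).factorial * N.factorial = (m+1+N).factorial := by
      have := Nat.choose_mul_factorial_mul_factorial (Nat.le_add_right (m+1) N)
      simpa [Nat.add_sub_cancel_left] using this
    have : ((m+1+N).choose (m+1) : ℝ) * (m+1).factorial * N.factorial = ((m+1+N).factorial : ℝ) := by
      exact_mod_cast congrArg (fun z : ℕ => (z : ℝ)) hnat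
    simp only [Nat.succ_sub_one]
    rw [← this, Nat.factorial_succ]
    push_cast
    ring
  have hfz : ((M+N).factorial : ℝ) ≠ 0 := Nat.cast_ne_zero.mpr (Nat.factorial_ne_zero _)
  field_simp
  linarith [hfac]
end

section
/- Fix integers k ≤ s/2, l ≤ t/2 with s, t ≥ 0, and define f_j = C(s+t, j)^{-1} ∑_i C(s, i)·1_{k ≤ i ≤ s−k}·C(t, j−i)·1_{l ≤ j−i ≤ t−l}. Then f_j ≤ f_{j+1} for all j < (s+t)/2. -/
open Finset


private lemma chooseA (n a : ℕ) :
    ((n:ℝ) - a) * (n.choose a : ℝ) = ((a:ℝ) + 1) * (n.choose (a+1) : ℝ) := by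
  rcases le_or_gt a n with h | h
  · have h1 := Nat.choose_succ_right_eq n a
    have h2 : ((n - a : ℕ):ℝ) = (n:ℝ) - a := by
      rw [Nat.cast_sub h]
    have h3 : (n.choose (a+1) : ℝ) * ((a:ℝ) + 1) = (n.choose a : ℝ) * ((n - a : ℕ):ℝ) := by
      exact_mod_cast congrArg (Nat.cast (R := ℝ)) h1
    rw [h2] at h3
    linarith
  · have e1 : n.choose a = 0 := Nat.choose_eq_zero_of_lt h
    have e2 : n.choose (a+1) = 0 := Nat.choose_eq_zero_of_lt (by omega)
    simp [e1, e2]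

private lemma chooseStep (n b : ℕ) (h : 2*b + 1 ≤ n) : n.choose b ≤ n.choose (b+1) := by
  have h1 := Nat.choose_succ_right_eq n b
  have h2 : n.choose b * (b+1) ≤ n.choose b * (n - b) :=
    Nat.mul_le_mul_left _ (by omega)
  rw [← h1] at h2
  exact Nat.le_of_mul_le_mul_right h2 (by omega)

private lemma chooseHalf (n a c : ℕ) (hc : 2*c ≤ n) (hac : a ≤ c) :
    n.choose a ≤ n.choose c := by
  induction c with
  | zero => have : a = 0 := by omega
            simp [this]
  | succ c ih =>
      rcases Nat.lt_or_ge a (c+1) with h | h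
      · exact (ih (by omega) (by omega)).trans (chooseStep n c (by omega))
      · have : a = c + 1 := by omega
        simp [this]

private lemma chooseMono (n a b : ℕ) (hab : a ≤ b) (hs : a + b ≤ n) :
    n.choose a ≤ n.choose b := by
  by_cases h : 2*b ≤ n
  · exact chooseHalf n a b h hab
  · have hb : b ≤ n := by omega
    rw [← Nat.choose_symm hb]
    exact chooseHalf n a (n - b) (by omega) (by omega)

private lemma sum_pair_nonneg (n p q : ℕ) (g : ℕ → ℝ) (hpq : p ≠ q)
    (hpos : ∀ i, i < n → i ≠ q → 0 ≤ g i)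
    (hneg : q < n → 0 ≤ (if p < n then g p else 0) + g q) :
    0 ≤ ∑ i ∈ Finset.range n, g i := by
  by_cases hq : q < n
  · by_cases hp : p < n
    · have hpmem : p ∈ Finset.range n := Finset.mem_range.mpr hp
      have hqmem : q ∈ (Finset.range n).erase p :=
        Finset.mem_erase.mpr ⟨fun h => hpq h.symm, Finset.mem_range.mpr hq⟩
      rw [← Finset.add_sum_erase _ g hpmem, ← Finset.add_sum_erase _ g hqmem]
      have hrest : 0 ≤ ∑ i ∈ ((Finset.range n).erase p).erase q, g i := by
        apply Finset.sum_nonneg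
        intro i hi
        have h1 := Finset.mem_erase.mp hi
        have h2 := Finset.mem_erase.mp h1.2
        exact hpos i (Finset.mem_range.mp h2.2) h1.1
      have := hneg hq
      rw [if_pos hp] at this
      linarith
    · have hqmem : q ∈ Finset.range n := Finset.mem_range.mpr hq
      rw [← Finset.add_sum_erase _ g hqmem]
      have hrest : 0 ≤ ∑ i ∈ (Finset.range n).erase q, g i := by
        apply Finset.sum_nonneg
        intro i hi
        have h1 := Finset.mem_erase.mp hi
        exact hpos i (Finset.mem_range.mp h1.2) h1.1
      have := hneg hq
      rw [if_neg hp] at this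
      linarith
  · apply Finset.sum_nonneg
    intro i hi
    refine hpos i (Finset.mem_range.mp hi) fun h => ?_
    exact hq (h ▸ Finset.mem_range.mp hi)

private lemma red_ineq (s t k l j : ℕ) (hk : 2 * k ≤ s) (hj : 2 * j < s + t) :
    ∑ i ∈ Finset.range (j+2),
      (if k ≤ i - 1 ∧ i - 1 ≤ s - k ∧ l ≤ j + 1 - i ∧ j + 1 - i ≤ t - l ∧ 1 ≤ i
        then (i:ℝ) * (s.choose i) * (t.choose (j+1-i)) else 0)
    ≤ ∑ i ∈ Finset.range (j+2),
      (if k ≤ i ∧ i ≤ s - k ∧ l ≤ j + 1 - i ∧ j + 1 - i ≤ t - l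
        then (i:ℝ) * (s.choose i) * (t.choose (j+1-i)) else 0) := by
  rw [← sub_nonneg, ← Finset.sum_sub_distrib]
  apply sum_pair_nonneg (j+2) k (s-k+1) _ (by omega)
  · -- hpos
    intro i hi hne
    by_cases h2 : k ≤ i - 1 ∧ i - 1 ≤ s - k ∧ l ≤ j + 1 - i ∧ j + 1 - i ≤ t - l ∧ 1 ≤ i
    · have h1 : k ≤ i ∧ i ≤ s - k ∧ l ≤ j + 1 - i ∧ j + 1 - i ≤ t - l := by omega
      rw [if_pos h1, if_pos h2, sub_self]
    · rw [if_neg h2, sub_zero]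
      split_ifs with h1
      · positivity
      · exact le_rfl
  · -- hneg
    intro hqn
    have hkn : k < j + 2 := by omega
    rw [if_pos hkn]
    have hcFk : ¬(k ≤ k - 1 ∧ k - 1 ≤ s - k ∧ l ≤ j + 1 - k ∧ j + 1 - k ≤ t - l ∧ 1 ≤ k) := by
      omega
    have hcq : ¬(k ≤ s - k + 1 ∧ s - k + 1 ≤ s - k ∧ l ≤ j + 1 - (s-k+1) ∧ j + 1 - (s-k+1) ≤ t - l) := by
      omega
    rw [if_neg hcFk, if_neg hcq]
    by_cases h2 : k ≤ (s-k+1) - 1 ∧ (s-k+1) - 1 ≤ s - k ∧ l ≤ j + 1 - (s-k+1) ∧ j + 1 - (s-k+1) ≤ t - l ∧ 1 ≤ s-k+1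
    · have h1 : k ≤ k ∧ k ≤ s - k ∧ l ≤ j + 1 - k ∧ j + 1 - k ≤ t - l := by omega
      rw [if_pos h1, if_pos h2]
      have hnat : (s-k+1) * (s.choose (s-k+1)) * (t.choose (j+1-(s-k+1)))
          ≤ k * (s.choose k) * (t.choose (j+1-k)) := by
        rcases Nat.eq_zero_or_pos k with hk0 | hk1
        · have hz : s.choose (s-k+1) = 0 := Nat.choose_eq_zero_of_lt (by omega)
          simp [hz]
        · have h3 : s - (k-1) = s - k + 1 := by omega
          have hsym : s.choose (s-k+1) = s.choose (k-1) := by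
            rw [← h3, Nat.choose_symm (by omega)]
          have hrec := Nat.choose_succ_right_eq s (k-1)
          have h4 : k - 1 + 1 = k := by omega
          rw [h4, h3] at hrec
          -- hrec : s.choose k * k = s.choose (k-1) * (s-k+1)
          have hw : (s-k+1) * (s.choose (s-k+1)) = k * (s.choose k) := by
            rw [hsym, Nat.mul_comm, ← hrec, Nat.mul_comm]
          have hmono : t.choose (j+1-(s-k+1)) ≤ t.choose (j+1-k) :=
            chooseMono t _ _ (by omega) (by omega)
          calc (s-k+1) * (s.choose (s-k+1)) * (t.choose (j+1-(s-k+1)))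
              = k * (s.choose k) * (t.choose (j+1-(s-k+1))) := by rw [hw]
            _ ≤ k * (s.choose k) * (t.choose (j+1-k)) := Nat.mul_le_mul_left _ hmono
      have hc := (Nat.cast_le (α := ℝ)).2 hnat
      push_cast at hc ⊢
      linarith
    · rw [if_neg h2]
      split_ifs with h1
      · have : (0:ℝ) ≤ ((s-k+1:ℕ):ℝ) * (s.choose (s-k+1)) * (t.choose (j+1-(s-k+1))) := by positivity
        have h0 : (0:ℝ) ≤ (k:ℝ) * (s.choose k) * (t.choose (j+1-k)) := by positivity
        linarith
      · simp

private lemma blue_ineq (s t k l j : ℕ) (hl : 2 * l ≤ t) (hj : 2 * j < s + t) :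
    ∑ i ∈ Finset.range (j+2),
      (if k ≤ i ∧ i ≤ s - k ∧ l ≤ j - i ∧ j - i ≤ t - l
        then ((j:ℝ) + 1 - i) * (s.choose i) * (t.choose (j+1-i)) else 0)
    ≤ ∑ i ∈ Finset.range (j+2),
      (if k ≤ i ∧ i ≤ s - k ∧ l ≤ j + 1 - i ∧ j + 1 - i ≤ t - l
        then ((j:ℝ) + 1 - i) * (s.choose i) * (t.choose (j+1-i)) else 0) := by
  by_cases hbt : t - l ≤ j
  · -- main case: use the two boundary points p = j+1-l, q = j-(t-l)
    have hlj : l ≤ j := by omega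
    rw [← sub_nonneg, ← Finset.sum_sub_distrib]
    apply sum_pair_nonneg (j+2) (j+1-l) (j-(t-l)) _ (by omega)
    · -- hpos
      intro i hi hne
      by_cases h2 : k ≤ i ∧ i ≤ s - k ∧ l ≤ j - i ∧ j - i ≤ t - l
      · have h1 : k ≤ i ∧ i ≤ s - k ∧ l ≤ j + 1 - i ∧ j + 1 - i ≤ t - l := by omega
        rw [if_pos h1, if_pos h2, sub_self]
      · rw [if_neg h2, sub_zero]
        split_ifs with h1
        · have hi' : (i:ℝ) ≤ (j:ℝ) + 1 := by exact_mod_cast Nat.cast_le.mpr (by omega : i ≤ j+1)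
          have : (0:ℝ) ≤ (j:ℝ) + 1 - i := by linarith
          positivity
        · exact le_rfl
    · -- hneg
      intro hqn
      have hpn : j + 1 - l < j + 2 := by omega
      rw [if_pos hpn]
      set p := j + 1 - l with hp
      set q := j - (t - l) with hq
      have hcq1 : ¬(k ≤ q ∧ q ≤ s - k ∧ l ≤ j + 1 - q ∧ j + 1 - q ≤ t - l) := by omega
      rw [if_neg hcq1]
      by_cases h2 : k ≤ q ∧ q ≤ s - k ∧ l ≤ j - q ∧ j - q ≤ t - l
      · -- negative term present
        have h1 : k ≤ p ∧ p ≤ s - k ∧ l ≤ j + 1 - p ∧ j + 1 - p ≤ t - l := by omega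
        rw [if_pos h1, if_pos h2]
        rcases Nat.eq_zero_or_pos l with hl0 | hl1
        · -- l = 0 : everything degenerates to 0
          have hq0 : t.choose (j+1-q) = 0 := by
            apply Nat.choose_eq_zero_of_lt; omega
          have hp1 : p = j + 1 := by omega
          have hYp : ((j:ℝ) + 1 - p) = 0 := by rw [hp1]; push_cast; ring
          rw [hq0, hYp]
          norm_num
        · -- l ≥ 1
          have hcGp : ¬(k ≤ p ∧ p ≤ s - k ∧ l ≤ j - p ∧ j - p ≤ t - l) := by omega
          rw [if_neg hcGp]
          have hnat : (j+1-q) * (s.choose q) * (t.choose (j+1-q))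
              ≤ (j+1-p) * (s.choose p) * (t.choose (j+1-p)) := by
            have e1 : j + 1 - q = t - l + 1 := by omega
            have e2 : j + 1 - p = l := by omega
            rw [e1, e2]
            have h3 : t - (l-1) = t - l + 1 := by omega
            have hsym : t.choose (t-l+1) = t.choose (l-1) := by
              rw [← h3, Nat.choose_symm (by omega)]
            have hrec := Nat.choose_succ_right_eq t (l-1)
            have h4 : l - 1 + 1 = l := by omega
            rw [h4, h3] at hrec
            -- hrec : t.choose l * l = t.choose (l-1) * (t-l+1)
            have hw : (t-l+1) * (t.choose (t-l+1)) = l * (t.choose l) := by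
              rw [hsym, Nat.mul_comm, ← hrec, Nat.mul_comm]
            have hmono : s.choose q ≤ s.choose p :=
              chooseMono s _ _ (by omega) (by omega)
            calc (t-l+1) * (s.choose q) * (t.choose (t-l+1))
                = ((t-l+1) * (t.choose (t-l+1))) * (s.choose q) := by ring
              _ = (l * (t.choose l)) * (s.choose q) := by rw [hw]
              _ ≤ (l * (t.choose l)) * (s.choose p) := Nat.mul_le_mul_left _ hmono
              _ = l * (s.choose p) * (t.choose l) := by ring
          have hc := (Nat.cast_le (α := ℝ)).2 hnat
          have ep : ((j:ℝ) + 1 - p) = ((j+1-p : ℕ):ℝ) := by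
            rw [Nat.cast_sub (by omega : p ≤ j + 1)]; push_cast; ring
          have eq' : ((j:ℝ) + 1 - q) = ((j+1-q : ℕ):ℝ) := by
            rw [Nat.cast_sub (by omega : q ≤ j + 1)]; push_cast; ring
          rw [ep, eq']
          push_cast at hc ⊢
          linarith
      · rw [if_neg h2]
        have hple : (p:ℝ) ≤ (j:ℝ) + 1 := by exact_mod_cast Nat.cast_le.mpr (by omega : p ≤ j+1)
        have hnn : (0:ℝ) ≤ (j:ℝ) + 1 - p := by linarith
        have hpr : (0:ℝ) ≤ ((j:ℝ) + 1 - p) * (s.choose p) * (t.choose (j+1-p)) := by positivity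
        split_ifs with hA hB hB
        · linarith
        · linarith
        · have hp1 : p = j + 1 := by omega
          have hz : ((j:ℝ) + 1 - (p:ℝ)) = 0 := by rw [hp1]; push_cast; ring
          rw [hz]
          norm_num
        · norm_num
  · -- easy case: t - l > j, termwise
    apply Finset.sum_le_sum
    intro i hi
    have hij : i < j + 2 := Finset.mem_range.mp hi
    by_cases h2 : k ≤ i ∧ i ≤ s - k ∧ l ≤ j - i ∧ j - i ≤ t - l
    · have h1 : k ≤ i ∧ i ≤ s - k ∧ l ≤ j + 1 - i ∧ j + 1 - i ≤ t - l := by omega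
      rw [if_pos h1, if_pos h2]
    · rw [if_neg h2]
      split_ifs with h1
      · have hi' : (i:ℝ) ≤ (j:ℝ) + 1 := by exact_mod_cast Nat.cast_le.mpr (by omega : i ≤ j+1)
        have : (0:ℝ) ≤ (j:ℝ) + 1 - i := by linarith
        positivity
      · exact le_rfl

private lemma conv_key (s t k l j : ℕ) (hk : 2 * k ≤ s) (hl : 2 * l ≤ t) (hj : 2 * j < s + t) :
    ((s:ℝ) + t - j) *
      (∑ i ∈ Finset.range (j + 1),
        (if k ≤ i ∧ i ≤ s - k ∧ l ≤ j - i ∧ j - i ≤ t - l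
          then ((s.choose i : ℝ) * (t.choose (j - i))) else 0)) ≤
    ((j:ℝ) + 1) *
      (∑ i ∈ Finset.range (j + 1 + 1),
        (if k ≤ i ∧ i ≤ s - k ∧ l ≤ j + 1 - i ∧ j + 1 - i ≤ t - l
          then ((s.choose i : ℝ) * (t.choose (j + 1 - i))) else 0)) := by
  have hsplit : ((s:ℝ) + t - j) *
      (∑ i ∈ Finset.range (j + 1),
        (if k ≤ i ∧ i ≤ s - k ∧ l ≤ j - i ∧ j - i ≤ t - l
          then ((s.choose i : ℝ) * (t.choose (j - i))) else 0)) =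
      (∑ i ∈ Finset.range (j + 1),
        (if k ≤ i ∧ i ≤ s - k ∧ l ≤ j - i ∧ j - i ≤ t - l
          then ((i:ℝ) + 1) * (s.choose (i+1)) * (t.choose (j - i)) else 0)) +
      (∑ i ∈ Finset.range (j + 1),
        (if k ≤ i ∧ i ≤ s - k ∧ l ≤ j - i ∧ j - i ≤ t - l
          then ((j:ℝ) + 1 - i) * (s.choose i) * (t.choose (j + 1 - i)) else 0)) := by
    rw [Finset.mul_sum, ← Finset.sum_add_distrib]
    refine Finset.sum_congr rfl ?_
    intro i hi
    have hij : i ≤ j := by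
      have := Finset.mem_range.mp hi; omega
    rw [mul_ite, mul_zero]
    split_ifs with hc
    · have h1 := chooseA s i
      have h2 := chooseA t (j - i)
      have e : j - i + 1 = j + 1 - i := by omega
      rw [e] at h2
      have hd : ((j - i : ℕ):ℝ) = (j:ℝ) - i := by rw [Nat.cast_sub hij]
      linear_combination (t.choose (j - i) : ℝ) * h1 + (s.choose i : ℝ) * h2 +
        ((s.choose i : ℝ) * (t.choose (j - i)) + (s.choose i : ℝ) * (t.choose (j + 1 - i))) * hd
    · simp
  have hred0 : (∑ i ∈ Finset.range (j + 1),
        (if k ≤ i ∧ i ≤ s - k ∧ l ≤ j - i ∧ j - i ≤ t - l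
          then ((i:ℝ) + 1) * (s.choose (i+1)) * (t.choose (j - i)) else 0)) =
      ∑ i ∈ Finset.range (j + 2),
        (if k ≤ i - 1 ∧ i - 1 ≤ s - k ∧ l ≤ j + 1 - i ∧ j + 1 - i ≤ t - l ∧ 1 ≤ i
          then (i:ℝ) * (s.choose i) * (t.choose (j+1-i)) else 0) := by
    rw [Finset.sum_range_succ'
      (fun i => if k ≤ i - 1 ∧ i - 1 ≤ s - k ∧ l ≤ j + 1 - i ∧ j + 1 - i ≤ t - l ∧ 1 ≤ i
          then (i:ℝ) * (s.choose i) * (t.choose (j+1-i)) else 0) (j+1)]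
    have h0 : (if k ≤ 0 - 1 ∧ 0 - 1 ≤ s - k ∧ l ≤ j + 1 - 0 ∧ j + 1 - 0 ≤ t - l ∧ 1 ≤ 0
          then ((0:ℕ):ℝ) * (s.choose 0) * (t.choose (j+1-0)) else 0) = 0 := by
      norm_num
    rw [h0, add_zero]
    refine Finset.sum_congr rfl ?_
    intro i hi
    have e1 : i + 1 - 1 = i := by omega
    have e2 : j + 1 - (i + 1) = j - i := by omega
    have e3 : (k ≤ i ∧ i ≤ s - k ∧ l ≤ j - i ∧ j - i ≤ t - l ∧ 1 ≤ i + 1) ↔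
        (k ≤ i ∧ i ≤ s - k ∧ l ≤ j - i ∧ j - i ≤ t - l) := by omega
    simp only [e1, e2, e3]
    push_cast
    ring_nf
  have hblue0 : (∑ i ∈ Finset.range (j + 1),
        (if k ≤ i ∧ i ≤ s - k ∧ l ≤ j - i ∧ j - i ≤ t - l
          then ((j:ℝ) + 1 - i) * (s.choose i) * (t.choose (j + 1 - i)) else 0)) =
      ∑ i ∈ Finset.range (j + 2),
        (if k ≤ i ∧ i ≤ s - k ∧ l ≤ j - i ∧ j - i ≤ t - l
          then ((j:ℝ) + 1 - i) * (s.choose i) * (t.choose (j + 1 - i)) else 0) := by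
    symm
    rw [Finset.sum_range_succ]
    have hz : ((j:ℝ) + 1 - ((j+1 : ℕ):ℝ)) = 0 := by push_cast; ring
    rw [hz, zero_mul, zero_mul, ite_self, add_zero]
  have hrhs : ((j:ℝ) + 1) *
      (∑ i ∈ Finset.range (j + 1 + 1),
        (if k ≤ i ∧ i ≤ s - k ∧ l ≤ j + 1 - i ∧ j + 1 - i ≤ t - l
          then ((s.choose i : ℝ) * (t.choose (j + 1 - i))) else 0)) =
      (∑ i ∈ Finset.range (j + 2),
        (if k ≤ i ∧ i ≤ s - k ∧ l ≤ j + 1 - i ∧ j + 1 - i ≤ t - l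
          then (i:ℝ) * (s.choose i) * (t.choose (j+1-i)) else 0)) +
      (∑ i ∈ Finset.range (j + 2),
        (if k ≤ i ∧ i ≤ s - k ∧ l ≤ j + 1 - i ∧ j + 1 - i ≤ t - l
          then ((j:ℝ) + 1 - i) * (s.choose i) * (t.choose (j+1-i)) else 0)) := by
    rw [Finset.mul_sum, ← Finset.sum_add_distrib]
    refine Finset.sum_congr rfl ?_
    intro i hi
    rw [mul_ite, mul_zero]
    split_ifs with hc
    · ring
    · simp
  rw [hsplit, hrhs, hred0, hblue0]
  exact add_le_add (red_ineq s t k l j hk hj) (blue_ineq s t k l j hl hj)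

theorem conv_indicator_mono (s t k l : ℕ) (hk : 2 * k ≤ s) (hl : 2 * l ≤ t)
    (f : ℕ → ℝ)
    (hf : ∀ j, f j = (((s + t).choose j : ℝ))⁻¹ *
      ∑ i ∈ Finset.range (j + 1),
        (if k ≤ i ∧ i ≤ s - k ∧ l ≤ j - i ∧ j - i ≤ t - l
          then ((s.choose i : ℝ) * (t.choose (j - i))) else 0)) :
    ∀ j, 2 * j < s + t → f j ≤ f (j + 1) := by
  intro j hj
  rw [hf j, hf (j + 1)]
  have hc1 : (0:ℝ) < ((s + t).choose j : ℝ) := by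
    exact_mod_cast Nat.choose_pos (by omega : j ≤ s + t)
  have hc2 : (0:ℝ) < ((s + t).choose (j + 1) : ℝ) := by
    exact_mod_cast Nat.choose_pos (by omega : j + 1 ≤ s + t)
  set S : ℝ := ∑ i ∈ Finset.range (j + 1),
        (if k ≤ i ∧ i ≤ s - k ∧ l ≤ j - i ∧ j - i ≤ t - l
          then ((s.choose i : ℝ) * (t.choose (j - i))) else 0) with hS
  set S' : ℝ := ∑ i ∈ Finset.range (j + 1 + 1),
        (if k ≤ i ∧ i ≤ s - k ∧ l ≤ j + 1 - i ∧ j + 1 - i ≤ t - l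
          then ((s.choose i : ℝ) * (t.choose (j + 1 - i))) else 0) with hS'
  have hSnn : 0 ≤ S := by
    apply Finset.sum_nonneg
    intro i hi
    split_ifs
    · positivity
    · exact le_rfl
  have key : ((s:ℝ) + t - j) * S ≤ ((j:ℝ) + 1) * S' := conv_key s t k l j hk hl hj
  rw [inv_mul_eq_div, inv_mul_eq_div, div_le_div_iff₀ hc1 hc2]
  have hNat := Nat.choose_succ_right_eq (s + t) j
  have hcast : ((s + t).choose (j + 1) : ℝ) * ((j:ℝ) + 1) =
      ((s + t).choose j : ℝ) * ((s:ℝ) + t - j) := by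
    have h2 : ((s + t - j : ℕ):ℝ) = (s:ℝ) + t - j := by
      rw [Nat.cast_sub (by omega : j ≤ s + t)]; push_cast; ring
    have h3 : ((s + t).choose (j + 1) : ℝ) * ((j:ℝ) + 1) =
        ((s + t).choose j : ℝ) * ((s + t - j : ℕ):ℝ) := by
      exact_mod_cast congrArg (Nat.cast (R := ℝ)) hNat
    rw [h2] at h3
    exact h3
  have hj1 : (0:ℝ) < (j:ℝ) + 1 := by positivity
  apply le_of_mul_le_mul_right _ hj1
  calc S * ((s + t).choose (j + 1) : ℝ) * ((j:ℝ) + 1)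
      = S * (((s + t).choose (j + 1) : ℝ) * ((j:ℝ) + 1)) := by ring
    _ = S * (((s + t).choose j : ℝ) * ((s:ℝ) + t - j)) := by rw [hcast]
    _ = ((s + t).choose j : ℝ) * (((s:ℝ) + t - j) * S) := by ring
    _ ≤ ((s + t).choose j : ℝ) * (((j:ℝ) + 1) * S') := by
        exact mul_le_mul_of_nonneg_left key hc1.le
    _ = S' * ((s + t).choose j : ℝ) * ((j:ℝ) + 1) := by ring
end

section
/- Suppose k, l, s, t, j are nonnegative integers with 2k ≤ s, 2l ≤ t, and 2j ≤ s + t − 1. Then C(t, j−k+1)·1_{j−k+1 ≤ t−l} ≥ C(t, j−s+k)·1_{l ≤ j−s+k}. -/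
/-- Binomial coefficient `C(n, m)` for an integer `m`, zero when `m < 0`. -/
def ichoose (n : ℕ) (m : ℤ) : ℕ := if 0 ≤ m then n.choose m.toNat else 0

lemma choose_mono_aux (t : ℕ) : ∀ b a : ℕ, a ≤ b → a + b ≤ t → t.choose a ≤ t.choose b := by
  intro b
  induction b using Nat.strong_induction_on with
  | _ b ih =>
    intro a hab hsum
    rcases eq_or_lt_of_le hab with rfl | hlt
    · exact le_refl _
    · rcases le_or_gt (2 * b) t with h2 | h2
      · have h1 : t.choose a ≤ t.choose (b - 1) := ih (b - 1) (by omega) a (by omega) (by omega)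
        have h3 : (b - 1) < t / 2 := by omega
        have := Nat.choose_le_succ_of_lt_half_left h3
        have hb : b - 1 + 1 = b := by omega
        rw [hb] at this
        exact h1.trans this
      · have hbt : b ≤ t := by omega
        rw [← Nat.choose_symm hbt]
        exact ih (t - b) (by omega) a (by omega) (by omega)

theorem choose_indicator_ineq (s t k l j : ℕ) (hk : 2 * k ≤ s) (hl : 2 * l ≤ t)
    (hj : 2 * j + 1 ≤ s + t) :
    (ichoose t ((j : ℤ) - s + k) : ℝ) *
        (if (l : ℤ) ≤ (j : ℤ) - s + k then 1 else 0) ≤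
      (ichoose t ((j : ℤ) - k + 1) : ℝ) *
        (if (j : ℤ) - k + 1 ≤ (t : ℤ) - l then 1 else 0) := by
  by_cases hL : (l : ℤ) ≤ (j : ℤ) - s + k
  · have ha : (0 : ℤ) ≤ (j : ℤ) - s + k := le_trans (by exact_mod_cast Nat.zero_le l) hL
    have hb : (0 : ℤ) ≤ (j : ℤ) - k + 1 := by omega
    have hR : (j : ℤ) - k + 1 ≤ (t : ℤ) - l := by omega
    rw [if_pos hL, if_pos hR]
    simp only [ichoose, if_pos ha, if_pos hb, mul_one]
    have key : t.choose ((j : ℤ) - s + k).toNat ≤ t.choose ((j : ℤ) - k + 1).toNat := by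
      apply choose_mono_aux
      · omega
      · omega
    exact_mod_cast key
  · rw [if_neg hL, mul_zero]
    positivity
end

section
/- Call a finite nonnegative real sequence (p_0, …, p_s) symmetric if p_i = p_{s−i} for all i, and ultra-unimodal if the sequence (p_i / C(s, i))_{i=0}^s is unimodal. Then the convolution of two symmetric ultra-unimodal sequences is ultra-unimodal (and symmetric). -/
open Finset

/-- `(b 0, …, b n)` is unimodal: weakly increasing up to some `m ≤ n`, then weakly
decreasing. -/
def UnimodalOn (b : ℕ → ℝ) (n : ℕ) : Prop :=
  ∃ m ≤ n, (∀ i, i < m → b i ≤ b (i + 1)) ∧ (∀ i, m ≤ i → i < n → b (i + 1) ≤ b i)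

/-- `(p 0, …, p s)` is ultra-unimodal: `(p i / C(s,i))` is unimodal. -/
def UltraUnimodal (p : ℕ → ℝ) (s : ℕ) : Prop :=
  UnimodalOn (fun i => p i / (s.choose i : ℝ)) s

namespace ConvAux

noncomputable def B (s k i : ℕ) : ℝ := if k ≤ i ∧ i ≤ s - k then (s.choose i : ℝ) else 0

lemma Bnn (s k i : ℕ) : 0 ≤ B s k i := by
  unfold B; split_ifs <;> positivity

lemma choose_id_real (s i : ℕ) :
    ((i : ℝ) + 1) * (s.choose (i + 1) : ℝ) = ((s : ℝ) - i) * (s.choose i : ℝ) := by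
  rcases le_or_gt i s with h | h
  · have hc : ((s.choose (i+1) * (i+1) : ℕ) : ℝ) = ((s.choose i * (s - i) : ℕ) : ℝ) := by
      rw [Nat.choose_succ_right_eq]
    push_cast [Nat.cast_sub h] at hc
    linarith
  · rw [Nat.choose_eq_zero_of_lt h, Nat.choose_eq_zero_of_lt (by omega)]
    ring

lemma choose_mono2 (t : ℕ) : ∀ d v : ℕ, 2 * (v + d) ≤ t → t.choose v ≤ t.choose (v + d) := by
  intro d
  induction d with
  | zero => intro v _; simp
  | succ n ih =>
    intro v h
    have h1 : t.choose v ≤ t.choose (v + n) := ih v (by omega)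
    have h2 : t.choose (v + n) ≤ t.choose (v + n + 1) :=
      Nat.choose_le_succ_of_lt_half_left (by omega)
    calc t.choose v ≤ t.choose (v + n) := h1
      _ ≤ t.choose (v + (n+1)) := by rw [show v + (n+1) = v + n + 1 by ring]; exact h2

lemma choose_cmp (t u v : ℕ) (h1 : v ≤ u) (h2 : u + v ≤ t) : t.choose v ≤ t.choose u := by
  rcases le_or_gt (2 * u) t with h | h
  · have := choose_mono2 t (u - v) v (by omega)
    rwa [show v + (u - v) = u by omega] at this
  · have hu : u ≤ t := by omega
    rw [← Nat.choose_symm hu]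
    have := choose_mono2 t (t - u - v) v (by omega)
    rwa [show v + (t - u - v) = t - u by omega] at this

lemma keysum (s t k l j : ℕ) (hk : k + k ≤ s) (hj : 2 * j + 1 ≤ s + t) :
    0 ≤ ∑ i ∈ range (j + 1),
      (((i : ℝ) + 1) * B s k (i + 1) - ((s : ℝ) - i) * B s k i) * B t l (j - i) := by
  have hE : ∀ i : ℕ, ((i : ℝ) + 1) * B s k (i + 1) - ((s : ℝ) - i) * B s k i
      = (if i + 1 = k ∧ k ≤ s - k then ((s : ℝ) - i) * (s.choose i : ℝ) else 0)
        - (if i = s - k ∧ k ≤ i then ((s : ℝ) - i) * (s.choose i : ℝ) else 0) := by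
    intro i
    have hB1 : ((i : ℝ) + 1) * B s k (i + 1)
        = if k ≤ i + 1 ∧ i + 1 ≤ s - k then ((s : ℝ) - i) * (s.choose i : ℝ) else 0 := by
      unfold B
      split_ifs
      · exact choose_id_real s i
      · ring
    rw [hB1]
    unfold B
    split_ifs <;> first | ring1 | (exfalso; omega)
  have hsplit : ∑ i ∈ range (j + 1),
        (((i : ℝ) + 1) * B s k (i + 1) - ((s : ℝ) - i) * B s k i) * B t l (j - i)
      = (∑ i ∈ range (j + 1),
          (if i + 1 = k ∧ k ≤ s - k then ((s : ℝ) - i) * (s.choose i : ℝ) else 0) * B t l (j - i))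
        - ∑ i ∈ range (j + 1),
          (if i = s - k ∧ k ≤ i then ((s : ℝ) - i) * (s.choose i : ℝ) else 0) * B t l (j - i) := by
    rw [← Finset.sum_sub_distrib]
    exact Finset.sum_congr rfl fun i _ => by rw [hE i, sub_mul]
  rw [hsplit]
  have hS1nn : 0 ≤ ∑ i ∈ range (j + 1),
      (if i + 1 = k ∧ k ≤ s - k then ((s : ℝ) - i) * (s.choose i : ℝ) else 0) * B t l (j - i) := by
    apply Finset.sum_nonneg
    intro i _
    split_ifs with h
    · apply mul_nonneg (mul_nonneg _ (by positivity)) (Bnn _ _ _)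
      have : i ≤ s := by omega
      have : (i : ℝ) ≤ s := by exact_mod_cast this
      linarith
    · rw [zero_mul]
  by_cases h2 : s - k ≤ j ∧ l ≤ j - (s - k) ∧ j - (s - k) ≤ t - l ∧ 1 ≤ k
  · -- both boundary terms present; compare them
    obtain ⟨h2a, h2b, h2c, h2d⟩ := h2
    have e1 : ∀ i ∈ range (j + 1),
        (if i + 1 = k ∧ k ≤ s - k then ((s : ℝ) - i) * (s.choose i : ℝ) else 0) * B t l (j - i)
        = if i = k - 1 then
            ((s : ℝ) - (k - 1 : ℕ)) * (s.choose (k - 1) : ℝ) * B t l (j - (k - 1)) else 0 := by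
      intro i _
      split_ifs with h h'
      · obtain ⟨hh, _⟩ := h; subst h'; ring
      · exfalso; omega
      · exfalso; omega
      · rw [zero_mul]
    have e2 : ∀ i ∈ range (j + 1),
        (if i = s - k ∧ k ≤ i then ((s : ℝ) - i) * (s.choose i : ℝ) else 0) * B t l (j - i)
        = if i = s - k then
            ((s : ℝ) - (s - k : ℕ)) * (s.choose (s - k) : ℝ) * B t l (j - (s - k)) else 0 := by
      intro i _
      split_ifs with h h'
      · subst h'; ring
      · exfalso; omega
      · exfalso; omega
      · rw [zero_mul]
    rw [Finset.sum_congr rfl e1, Finset.sum_congr rfl e2,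
      Finset.sum_ite_eq' (range (j+1)) (k-1), Finset.sum_ite_eq' (range (j+1)) (s-k),
      if_pos (by simp [Finset.mem_range]; omega), if_pos (by simp [Finset.mem_range]; omega)]
    have hB1 : B t l (j - (k - 1)) = (t.choose (j - (k-1)) : ℝ) := by
      unfold B; rw [if_pos (by omega)]
    have hB2 : B t l (j - (s - k)) = (t.choose (j - (s-k)) : ℝ) := by
      unfold B; rw [if_pos (by omega)]
    rw [hB1, hB2, sub_nonneg]
    have c1 : ((s : ℝ) - (k - 1 : ℕ)) = ((s - (k-1) : ℕ) : ℝ) :=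
      (Nat.cast_sub (show k - 1 ≤ s by omega)).symm
    have c2 : ((s : ℝ) - (s - k : ℕ)) = ((s - (s-k) : ℕ) : ℝ) :=
      (Nat.cast_sub (show s - k ≤ s by omega)).symm
    rw [c1, c2]
    have hnat : (s - (s-k)) * s.choose (s-k) * t.choose (j - (s-k))
        ≤ (s - (k-1)) * s.choose (k-1) * t.choose (j - (k-1)) := by
      have hsymm : s.choose (s - k) = s.choose k := Nat.choose_symm (by omega)
      have hid : s.choose (k-1) * (s - (k-1)) = s.choose k * k := by
        have h := Nat.choose_succ_right_eq s (k-1)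
        rw [show k - 1 + 1 = k by omega] at h
        exact h.symm
      have hssk : s - (s - k) = k := by omega
      have hcc : t.choose (j - (s-k)) ≤ t.choose (j - (k-1)) :=
        choose_cmp t _ _ (by omega) (by omega)
      calc (s - (s-k)) * s.choose (s-k) * t.choose (j - (s-k))
          = k * s.choose k * t.choose (j - (s-k)) := by rw [hssk, hsymm]
        _ ≤ k * s.choose k * t.choose (j - (k-1)) := Nat.mul_le_mul_left _ hcc
        _ = (s - (k-1)) * s.choose (k-1) * t.choose (j - (k-1)) := by
            have h3 : (s - (k-1)) * s.choose (k-1) = k * s.choose k := by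
              rw [Nat.mul_comm, hid, Nat.mul_comm]
            rw [h3]
    calc (((s - (s-k) : ℕ)) : ℝ) * (s.choose (s-k) : ℝ) * (t.choose (j - (s-k)) : ℝ)
        = (((s - (s-k)) * s.choose (s-k) * t.choose (j - (s-k)) : ℕ) : ℝ) := by push_cast; ring
      _ ≤ (((s - (k-1)) * s.choose (k-1) * t.choose (j - (k-1)) : ℕ) : ℝ) := by
          exact_mod_cast hnat
      _ = ((s - (k-1) : ℕ) : ℝ) * (s.choose (k-1) : ℝ) * (t.choose (j - (k-1)) : ℝ) := by
          push_cast; ring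
  · -- second boundary term vanishes
    have hS2 : ∑ i ∈ range (j + 1),
        (if i = s - k ∧ k ≤ i then ((s : ℝ) - i) * (s.choose i : ℝ) else 0) * B t l (j - i)
        = 0 := by
      apply Finset.sum_eq_zero
      intro i hi
      rw [Finset.mem_range] at hi
      by_cases hc : i = s - k ∧ k ≤ i
      · rw [if_pos hc]
        obtain ⟨hc1, hc2⟩ := hc
        rcases Nat.eq_zero_or_pos k with hk0 | hk1
        · have : (s : ℝ) - i = 0 := by
            subst hc1; subst hk0; simp
          rw [this, zero_mul, zero_mul]
        · unfold B
          rw [if_neg (by omega), mul_zero]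
      · rw [if_neg hc, zero_mul]
    rw [hS2, sub_zero]
    exact hS1nn


lemma B_def : ∀ s k i : ℕ, B s k i = if k ≤ i ∧ i ≤ s - k then (s.choose i : ℝ) else 0 :=
  fun _ _ _ => rfl

lemma core (s t k l j : ℕ) (hk : k + k ≤ s) (hl : l + l ≤ t) (hj : 2 * j + 1 ≤ s + t) :
    ((s : ℝ) + t - j) * (∑ i ∈ range (j + 1), B s k i * B t l (j - i))
      ≤ ((j : ℝ) + 1) * ∑ i ∈ range (j + 2), B s k i * B t l (j + 1 - i) := by
  have eq1 : ((j : ℝ) + 1) * ∑ i ∈ range (j + 2), B s k i * B t l (j + 1 - i)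
      = (∑ i ∈ range (j + 1), ((i : ℝ) + 1) * B s k (i + 1) * B t l (j - i))
        + ∑ i ∈ range (j + 1), ((j : ℝ) + 1 - i) * B s k i * B t l (j + 1 - i) := by
    rw [Finset.mul_sum]
    have e : ∀ i ∈ range (j + 2), ((j : ℝ) + 1) * (B s k i * B t l (j + 1 - i))
        = (i : ℝ) * (B s k i * B t l (j + 1 - i))
          + ((j : ℝ) + 1 - i) * (B s k i * B t l (j + 1 - i)) := fun i _ => by ring
    rw [Finset.sum_congr rfl e, Finset.sum_add_distrib]
    congr 1
    · rw [Finset.sum_range_succ']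
      simp only [Nat.cast_zero, zero_mul, add_zero]
      refine Finset.sum_congr rfl fun i _ => ?_
      rw [show j + 1 - (i + 1) = j - i by omega]
      push_cast
      ring
    · rw [Finset.sum_range_succ]
      have hz : ((j : ℝ) + 1 - ((j + 1 : ℕ) : ℝ)) = 0 := by push_cast; ring
      rw [hz, zero_mul, add_zero]
      exact Finset.sum_congr rfl fun i _ => by ring
  have eq2 : ((s : ℝ) + t - j) * ∑ i ∈ range (j + 1), B s k i * B t l (j - i)
      = (∑ i ∈ range (j + 1), ((s : ℝ) - i) * B s k i * B t l (j - i))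
        + ∑ i ∈ range (j + 1), ((t : ℝ) - ((j : ℝ) - i)) * B s k i * B t l (j - i) := by
    rw [Finset.mul_sum, ← Finset.sum_add_distrib]
    exact Finset.sum_congr rfl fun i _ => by ring
  have ineq1 : ∑ i ∈ range (j + 1), ((s : ℝ) - i) * B s k i * B t l (j - i)
      ≤ ∑ i ∈ range (j + 1), ((i : ℝ) + 1) * B s k (i + 1) * B t l (j - i) := by
    have h := keysum s t k l j hk hj
    have hsp : ∑ i ∈ range (j + 1),
        (((i : ℝ) + 1) * B s k (i + 1) - ((s : ℝ) - i) * B s k i) * B t l (j - i)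
        = (∑ i ∈ range (j + 1), ((i : ℝ) + 1) * B s k (i + 1) * B t l (j - i))
          - ∑ i ∈ range (j + 1), ((s : ℝ) - i) * B s k i * B t l (j - i) := by
      rw [← Finset.sum_sub_distrib]
      exact Finset.sum_congr rfl fun i _ => by ring
    linarith [hsp ▸ h]
  have ineq2 : ∑ i ∈ range (j + 1), ((t : ℝ) - ((j : ℝ) - i)) * B s k i * B t l (j - i)
      ≤ ∑ i ∈ range (j + 1), ((j : ℝ) + 1 - i) * B s k i * B t l (j + 1 - i) := by
    have h := keysum t s l k j hl (by omega)
    rw [← Finset.sum_range_reflect] at h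
    simp only [Nat.add_sub_cancel] at h
    have e : ∀ i ∈ range (j + 1),
        (((((j - i : ℕ)) : ℝ) + 1) * B t l ((j - i) + 1)
          - ((t : ℝ) - ((j - i : ℕ) : ℝ)) * B t l (j - i)) * B s k (j - (j - i))
        = ((j : ℝ) + 1 - i) * B s k i * B t l (j + 1 - i)
          - ((t : ℝ) - ((j : ℝ) - i)) * B s k i * B t l (j - i) := by
      intro i hi
      rw [Finset.mem_range] at hi
      rw [show j - (j - i) = i by omega, show (j - i) + 1 = j + 1 - i by omega,
        Nat.cast_sub (by omega : i ≤ j)]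
      ring
    rw [Finset.sum_congr rfl e, Finset.sum_sub_distrib] at h
    linarith
  linarith

noncomputable def nrm (p : ℕ → ℝ) (s i : ℕ) : ℝ := p i / (s.choose i : ℝ)

lemma decomp (p : ℕ → ℝ) (s : ℕ) (hp0 : ∀ i, 0 ≤ p i) (hps : ∀ i, s < i → p i = 0)
    (hpsym : ∀ i ≤ s, p i = p (s - i)) (hpu : UnimodalOn (nrm p s) s) :
    ∃ c : ℕ → ℝ, (∀ k, 0 ≤ c k) ∧ ∀ i, p i = ∑ k ∈ range (s / 2 + 1), c k * B s k i := by
  obtain ⟨m, hm, hinc, hdec⟩ := hpu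
  set a : ℕ → ℝ := nrm p s with ha
  have ann : ∀ i, 0 ≤ a i := fun i => div_nonneg (hp0 i) (Nat.cast_nonneg _)
  have asym : ∀ i ≤ s, a i = a (s - i) := by
    intro i hi
    show p i / _ = p (s - i) / _
    rw [hpsym i hi, ← Nat.choose_symm hi]
  have adec : ∀ x y, m ≤ x → x ≤ y → y ≤ s → a y ≤ a x := by
    intro x y hmx hxy hys
    induction y, hxy using Nat.le_induction with
    | base => exact le_refl _
    | succ y hy ih =>
      exact le_trans (hdec y (le_trans hmx hy) (by omega)) (ih (by omega))
  have ainc : ∀ i, 2 * i + 1 ≤ s → a i ≤ a (i + 1) := by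
    intro i h
    rcases lt_or_ge i m with h' | h'
    · exact hinc i h'
    · rw [asym i (by omega)]
      exact adec (i + 1) (s - i) (by omega) (by omega) (by omega)
  refine ⟨fun k => if k = 0 then a 0 else if k ≤ s / 2 then a k - a (k - 1) else 0, ?_, ?_⟩
  · intro k
    dsimp only
    split_ifs with h1 h2
    · exact ann 0
    · have h3 := ainc (k - 1) (by omega)
      rw [show k - 1 + 1 = k by omega] at h3
      linarith
    · exact le_refl _
  · intro i
    have tel : ∀ K, K ≤ s / 2 →
        ∑ k ∈ range (K + 1),
          (if k = 0 then a 0 else if k ≤ s / 2 then a k - a (k - 1) else 0) = a K := by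
      intro K
      induction K with
      | zero => intro _; simp
      | succ n ih =>
        intro h
        rw [Finset.sum_range_succ, ih (by omega), if_neg (by omega), if_pos (by omega),
          show n + 1 - 1 = n by omega]
        ring
    rcases le_or_gt i s with his | his
    · have hpa : p i = (s.choose i : ℝ) * a i := by
        have hC : ((s.choose i : ℕ) : ℝ) ≠ 0 := Nat.cast_ne_zero.mpr (Nat.choose_pos his).ne'
        show p i = _ * (p i / _)
        field_simp
      have hMi : min i (s - i) ≤ i := min_le_left _ _
      have hMsi : min i (s - i) ≤ s - i := min_le_right _ _
      have hminc : min i (s - i) = i ∨ min i (s - i) = s - i := min_choice i (s - i)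
      have hM2 : min i (s - i) ≤ s / 2 := by omega
      have hstep1 : ∑ k ∈ range (s / 2 + 1),
            (if k = 0 then a 0 else if k ≤ s / 2 then a k - a (k - 1) else 0) * B s k i
          = ∑ k ∈ range (min i (s - i) + 1),
            (if k = 0 then a 0 else if k ≤ s / 2 then a k - a (k - 1) else 0) * B s k i := by
        symm
        apply Finset.sum_subset
        · intro x hx
          rw [Finset.mem_range] at hx ⊢
          omega
        · intro x hx hx'
          rw [Finset.mem_range] at hx hx'
          rw [B_def, if_neg (show ¬(x ≤ i ∧ i ≤ s - x) by omega), mul_zero]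
      have hstep2 : ∑ k ∈ range (min i (s - i) + 1),
            (if k = 0 then a 0 else if k ≤ s / 2 then a k - a (k - 1) else 0) * B s k i
          = (∑ k ∈ range (min i (s - i) + 1),
            (if k = 0 then a 0 else if k ≤ s / 2 then a k - a (k - 1) else 0))
              * (s.choose i : ℝ) := by
        rw [Finset.sum_mul]
        refine Finset.sum_congr rfl fun k hk => ?_
        rw [Finset.mem_range] at hk
        rw [B_def, if_pos (show k ≤ i ∧ i ≤ s - k by omega)]
      have haM : a (min i (s - i)) = a i := by
        rcases le_or_gt i (s - i) with h' | h'
        · rw [min_eq_left h']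
        · rw [min_eq_right (by omega), ← asym i his]
      rw [hstep1, hstep2, tel _ hM2, haM, hpa]
      ring
    · rw [hps i his]
      symm
      apply Finset.sum_eq_zero
      intro k hk
      rw [Finset.mem_range] at hk
      rw [B_def, if_neg (by omega), mul_zero]


end ConvAux

theorem conv_symm_ultraUnimodal (p q : ℕ → ℝ) (s t : ℕ)
    (hp0 : ∀ i, 0 ≤ p i) (hq0 : ∀ i, 0 ≤ q i)
    (hps : ∀ i, s < i → p i = 0) (hqt : ∀ i, t < i → q i = 0)
    (hpsym : ∀ i ≤ s, p i = p (s - i)) (hqsym : ∀ i ≤ t, q i = q (t - i))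
    (hpu : UltraUnimodal p s) (hqu : UltraUnimodal q t)
    (r : ℕ → ℝ) (hr : ∀ j, r j = ∑ i ∈ Finset.range (j + 1), p i * q (j - i)) :
    UltraUnimodal r (s + t) ∧ (∀ j ≤ s + t, r j = r (s + t - j)) := by
  classical
  open Finset ConvAux in
  -- decompose p and q into basic windows
  obtain ⟨c, hc0, hcp⟩ := ConvAux.decomp p s hp0 hps hpsym hpu
  obtain ⟨d, hd0, hdq⟩ := ConvAux.decomp q t hq0 hqt hqsym hqu
  have rdecomp : ∀ j, r j = ∑ k ∈ Finset.range (s / 2 + 1), ∑ l ∈ Finset.range (t / 2 + 1),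
      c k * d l * ∑ i ∈ Finset.range (j + 1), ConvAux.B s k i * ConvAux.B t l (j - i) := by
    intro j
    rw [hr j]
    have e1 : ∀ i ∈ Finset.range (j + 1), p i * q (j - i)
        = ∑ k ∈ Finset.range (s / 2 + 1), ∑ l ∈ Finset.range (t / 2 + 1),
            c k * d l * (ConvAux.B s k i * ConvAux.B t l (j - i)) := by
      intro i _
      rw [hcp i, hdq (j - i), Finset.sum_mul_sum]
      exact Finset.sum_congr rfl fun k _ => Finset.sum_congr rfl fun l _ => by ring
    rw [Finset.sum_congr rfl e1, Finset.sum_comm]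
    refine Finset.sum_congr rfl fun k _ => ?_
    rw [Finset.sum_comm]
    refine Finset.sum_congr rfl fun l _ => ?_
    rw [Finset.mul_sum]
  have hCpos : ∀ j, j ≤ s + t → (0:ℝ) < ((s + t).choose j : ℝ) := by
    intro j hj
    exact_mod_cast Nat.choose_pos hj
  have step : ∀ j, 2 * j + 1 ≤ s + t →
      r j * ((s + t).choose (j + 1) : ℝ) ≤ r (j + 1) * ((s + t).choose j : ℝ) := by
    intro j hj
    have hch : ((s + t).choose (j + 1) : ℝ) * ((j : ℝ) + 1)
        = ((s + t).choose j : ℝ) * ((s : ℝ) + t - j) := by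
      have hc := congrArg (Nat.cast : ℕ → ℝ) (Nat.choose_succ_right_eq (s + t) j)
      push_cast [Nat.cast_sub (show j ≤ s + t by omega)] at hc
      linarith
    have perkl : ∀ k ∈ Finset.range (s / 2 + 1), ∀ l ∈ Finset.range (t / 2 + 1),
        (∑ i ∈ Finset.range (j + 1), ConvAux.B s k i * ConvAux.B t l (j - i))
            * ((s + t).choose (j + 1) : ℝ)
          ≤ (∑ i ∈ Finset.range (j + 2), ConvAux.B s k i * ConvAux.B t l (j + 1 - i))
            * ((s + t).choose j : ℝ) := by
      intro k hk l hl
      rw [Finset.mem_range] at hk hl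
      have hcore := ConvAux.core s t k l j (by omega) (by omega) hj
      have h1 : (0:ℝ) < (j : ℝ) + 1 := by positivity
      have h2 : (0:ℝ) ≤ ((s + t).choose j : ℝ) := by positivity
      have key : ((j : ℝ) + 1) * ((∑ i ∈ Finset.range (j + 1),
              ConvAux.B s k i * ConvAux.B t l (j - i)) * ((s + t).choose (j + 1) : ℝ))
          ≤ ((j : ℝ) + 1) * ((∑ i ∈ Finset.range (j + 2),
              ConvAux.B s k i * ConvAux.B t l (j + 1 - i)) * ((s + t).choose j : ℝ)) := by
        calc ((j : ℝ) + 1) * ((∑ i ∈ Finset.range (j + 1),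
              ConvAux.B s k i * ConvAux.B t l (j - i)) * ((s + t).choose (j + 1) : ℝ))
            = ((s + t).choose j : ℝ) * (((s : ℝ) + t - j) * ∑ i ∈ Finset.range (j + 1),
              ConvAux.B s k i * ConvAux.B t l (j - i)) := by
              linear_combination (∑ i ∈ Finset.range (j + 1),
                ConvAux.B s k i * ConvAux.B t l (j - i)) * hch
          _ ≤ ((s + t).choose j : ℝ) * (((j : ℝ) + 1) * ∑ i ∈ Finset.range (j + 2),
              ConvAux.B s k i * ConvAux.B t l (j + 1 - i)) :=
              mul_le_mul_of_nonneg_left hcore h2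
          _ = ((j : ℝ) + 1) * ((∑ i ∈ Finset.range (j + 2),
              ConvAux.B s k i * ConvAux.B t l (j + 1 - i)) * ((s + t).choose j : ℝ)) := by
              ring
      exact le_of_mul_le_mul_left key h1
    rw [rdecomp j, rdecomp (j + 1), Finset.sum_mul, Finset.sum_mul]
    refine Finset.sum_le_sum fun k hk => ?_
    rw [Finset.sum_mul, Finset.sum_mul]
    refine Finset.sum_le_sum fun l hl => ?_
    have hnn : (0:ℝ) ≤ c k * d l := mul_nonneg (hc0 k) (hd0 l)
    calc c k * d l * (∑ i ∈ Finset.range (j + 1), ConvAux.B s k i * ConvAux.B t l (j - i))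
            * ((s + t).choose (j + 1) : ℝ)
        = (c k * d l) * ((∑ i ∈ Finset.range (j + 1), ConvAux.B s k i * ConvAux.B t l (j - i))
            * ((s + t).choose (j + 1) : ℝ)) := by ring
      _ ≤ (c k * d l) * ((∑ i ∈ Finset.range (j + 2), ConvAux.B s k i * ConvAux.B t l (j + 1 - i))
            * ((s + t).choose j : ℝ)) :=
          mul_le_mul_of_nonneg_left (perkl k hk l hl) hnn
      _ = c k * d l * (∑ i ∈ Finset.range (j + 2), ConvAux.B s k i * ConvAux.B t l (j + 1 - i))
            * ((s + t).choose j : ℝ) := by ring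
  have stepdiv : ∀ j, 2 * j + 1 ≤ s + t →
      r j / ((s + t).choose j : ℝ) ≤ r (j + 1) / ((s + t).choose (j + 1) : ℝ) := by
    intro j hj
    rw [div_le_div_iff₀ (hCpos j (by omega)) (hCpos (j + 1) (by omega))]
    exact step j hj
  have A1 : ∀ j, r j = ∑ i ∈ Finset.range (s + 1), p i * (if i ≤ j then q (j - i) else 0) := by
    intro j
    rw [hr j]
    have e1 : ∑ i ∈ Finset.range (j + 1), p i * q (j - i)
        = ∑ i ∈ Finset.range (j + s + 2), p i * (if i ≤ j then q (j - i) else 0) := by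
      rw [Finset.sum_congr rfl (show ∀ i ∈ Finset.range (j + 1), p i * q (j - i)
          = p i * (if i ≤ j then q (j - i) else 0) from fun i hi => by
        rw [Finset.mem_range] at hi
        rw [if_pos (by omega)])]
      apply Finset.sum_subset
      · intro x hx
        rw [Finset.mem_range] at hx ⊢
        omega
      · intro x hx hx'
        rw [Finset.mem_range] at hx hx'
        rw [if_neg (by omega), mul_zero]
    have e2 : ∑ i ∈ Finset.range (s + 1), p i * (if i ≤ j then q (j - i) else 0)
        = ∑ i ∈ Finset.range (j + s + 2), p i * (if i ≤ j then q (j - i) else 0) := by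
      apply Finset.sum_subset
      · intro x hx
        rw [Finset.mem_range] at hx ⊢
        omega
      · intro x hx hx'
        rw [Finset.mem_range] at hx hx'
        rw [hps x (by omega), zero_mul]
    rw [e1, ← e2]
  have rsymm : ∀ j ≤ s + t, r j = r (s + t - j) := by
    intro j hj
    rw [A1 j, A1 (s + t - j), ← Finset.sum_range_reflect
      (fun i => p i * (if i ≤ s + t - j then q (s + t - j - i) else 0)) (s + 1)]
    refine Finset.sum_congr rfl fun i hi => ?_
    rw [Finset.mem_range] at hi
    have hi' : i ≤ s := by omega
    simp only [Nat.add_sub_cancel]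
    rw [← hpsym i hi']
    by_cases h1 : i ≤ j
    · by_cases h2 : j ≤ t + i
      · rw [if_pos h1, if_pos (show s - i ≤ s + t - j by omega)]
        congr 1
        rw [show s + t - j - (s - i) = t - (j - i) by omega, ← hqsym (j - i) (by omega)]
      · rw [if_pos h1, if_neg (show ¬(s - i ≤ s + t - j) by omega),
          hqt (j - i) (by omega), mul_zero]
    · rw [if_neg h1, if_pos (show s - i ≤ s + t - j by omega),
        hqt (s + t - j - (s - i)) (by omega), mul_zero]
  have divsym : ∀ j ≤ s + t, r j / ((s + t).choose j : ℝ)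
      = r (s + t - j) / ((s + t).choose (s + t - j) : ℝ) := by
    intro j hj
    rw [← rsymm j hj, Nat.choose_symm hj]
  constructor
  · refine ⟨(s + t) / 2, by omega, ?_, ?_⟩
    · intro i hi
      exact stepdiv i (by omega)
    · intro i hi1 hi2
      have e1 := divsym (i + 1) (by omega)
      have e2 := divsym i (by omega)
      have hJ : s + t - i = (s + t - (i + 1)) + 1 := by omega
      have hstep := stepdiv (s + t - (i + 1)) (by omega)
      show r (i + 1) / ((s + t).choose (i + 1) : ℝ) ≤ r i / ((s + t).choose i : ℝ)
      rw [e1, e2, hJ]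
      exact hstep
  · exact rsymm
end

section
/- Every symmetric ultra-unimodal nonnegative sequence (p_0, …, p_s) can be written as a nonnegative linear combination of the sequences (C(s, i)·1_{k ≤ i ≤ s−k})_{i=0}^s for 0 ≤ k ≤ s/2. -/
theorem symm_ultraUnimodal_decomp (p : ℕ → ℝ) (s : ℕ)
    (hp0 : ∀ i, 0 ≤ p i)
    (hpsym : ∀ i ≤ s, p i = p (s - i))
    (hpu : UnimodalOn (fun i => p i / (s.choose i : ℝ)) s) :
    ∃ c : ℕ → ℝ, (∀ k, 0 ≤ c k) ∧
      ∀ i ≤ s, p i = ∑ k ∈ Finset.range (s / 2 + 1),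
        c k * ((s.choose i : ℝ) * (if k ≤ i ∧ i ≤ s - k then 1 else 0)) := by
  set q : ℕ → ℝ := fun i => p i / (s.choose i : ℝ) with hq
  have hchoose : ∀ i ≤ s, (0:ℝ) < s.choose i := by
    intro i hi; exact_mod_cast Nat.choose_pos hi
  have hqsym : ∀ i ≤ s, q i = q (s - i) := by
    intro i hi
    simp only [hq]
    rw [← hpsym i hi, Nat.choose_symm hi]
  obtain ⟨m, hm, hinc, hdec⟩ := hpu
  have hmono : ∀ k, 1 ≤ k → k ≤ s / 2 → q (k - 1) ≤ q k := by
    intro k hk1 hk2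
    rcases lt_or_ge (k - 1) m with h | h
    · have := hinc (k - 1) h
      rwa [Nat.sub_add_cancel hk1] at this
    · have hks : k ≤ s := le_trans hk2 (Nat.div_le_self s 2)
      have h1 : q (k - 1) = q (s - (k - 1)) := hqsym _ (by omega)
      have h2 : q k = q (s - k) := hqsym _ hks
      have h3 : q (s - k + 1) ≤ q (s - k) := hdec (s - k) (by omega) (by omega)
      rw [h1, h2]
      have he : s - (k - 1) = s - k + 1 := by omega
      rw [he]; exact h3
  set c : ℕ → ℝ := fun k =>
    if k ≤ s / 2 then (if k = 0 then q 0 else q k - q (k - 1)) else 0 with hc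
  have hq0 : 0 ≤ q 0 := div_nonneg (hp0 0) (Nat.cast_nonneg _)
  have htel : ∀ n, n ≤ s / 2 → ∑ k ∈ Finset.range (n + 1), c k = q n := by
    intro n hn
    induction n with
    | zero => simp [hc]
    | succ n ih =>
      rw [Finset.sum_range_succ, ih (by omega)]
      have : c (n + 1) = q (n + 1) - q n := by
        simp only [hc]
        rw [if_pos hn, if_neg (Nat.succ_ne_zero n)]
        simp
      rw [this]; ring
  refine ⟨c, ?_, ?_⟩
  · intro k
    simp only [hc]
    split_ifs with h1 h2
    · exact hq0
    · have := hmono k (Nat.one_le_iff_ne_zero.mpr h2) h1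
      linarith
    · exact le_refl 0
  · intro i hi
    have hci : (s.choose i : ℝ) ≠ 0 := ne_of_gt (hchoose i hi)
    set t := min i (s - i) with ht
    have htle : t ≤ s / 2 := by omega
    have hstep : ∀ k ∈ Finset.range (s / 2 + 1),
        c k * ((s.choose i : ℝ) * (if k ≤ i ∧ i ≤ s - k then 1 else 0))
          = if k ≤ t then (s.choose i : ℝ) * c k else 0 := by
      intro k hk
      rw [Finset.mem_range] at hk
      have hks : k ≤ s := le_trans (by omega) (Nat.div_le_self s 2)
      by_cases h : k ≤ i ∧ i ≤ s - k
      · rw [if_pos h, if_pos (by omega)]; ring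
      · rw [if_neg h, if_neg (by omega)]; ring
    rw [Finset.sum_congr rfl hstep]
    have hsub : ∑ k ∈ Finset.range (s / 2 + 1),
        (if k ≤ t then (s.choose i : ℝ) * c k else 0)
        = ∑ k ∈ Finset.range (t + 1), (s.choose i : ℝ) * c k := by
      rw [← Finset.sum_subset (Finset.range_subset_range.mpr (Nat.succ_le_succ htle))]
      · exact Finset.sum_congr rfl (fun k hk => by
          rw [Finset.mem_range] at hk; rw [if_pos (by omega)])
      · intro k _ hk
        rw [Finset.mem_range] at hk
        rw [if_neg (by omega)]
    rw [hsub, ← Finset.mul_sum, htel t htle]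
    have hqt : q t = q i := by
      rcases le_or_gt i (s - i) with h | h
      · rw [ht, min_eq_left h]
      · rw [ht, min_eq_right (le_of_lt h), ← hqsym i hi]
    rw [hqt]
    simp only [hq]
    field_simp
end

section
/- For all integers s, t, k, l with 0 ≤ 2k ≤ s and 0 ≤ 2l ≤ t, the convolution of the sequences (C(s, i)·1_{k ≤ i ≤ s−k})_{i=0}^s and (C(t, i)·1_{l ≤ i ≤ t−l})_{i=0}^t is ultra-unimodal, i.e., dividing the j-th term of the convolution by C(s+t, j) yields a unimodal sequence. -/
namespace ConvUU

/-- upper tail of the plain Vandermonde convolution -/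
def S (s t j v : ℕ) : ℕ := ∑ i ∈ Finset.Icc v j, s.choose i * t.choose (j - i)

/-- the truncated convolution, in ℕ -/
def cc (s t k l j : ℕ) : ℕ :=
  ∑ i ∈ Finset.range (j + 1),
    (if k ≤ i ∧ i ≤ s - k then s.choose i else 0) *
      (if l ≤ j - i ∧ j - i ≤ t - l then t.choose (j - i) else 0)

lemma S_cons (s t j v : ℕ) (h : v ≤ j) :
    S s t j v = s.choose v * t.choose (j - v) + S s t j (v + 1) := by
  have hins : Finset.Icc v j = insert v (Finset.Icc (v+1) j) := by
    ext a; simp [Finset.mem_Icc]; omega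
  rw [S, hins, Finset.sum_insert (by simp), S]

lemma S_empty (s t j v : ℕ) (h : j < v) : S s t j v = 0 := by
  rw [S, Finset.Icc_eq_empty (by omega), Finset.sum_empty]

/-- key ladder identity -/
lemma ident (s t j : ℕ) :
    ∀ d v, v + d = j + 1 →
      (j+1) * S s t (j+1) v = (s+t-j) * S s t j v + v * s.choose v * t.choose (j+1-v) := by
  intro d
  induction d with
  | zero =>
    intro v hv
    have hv' : v = j + 1 := by omega
    subst hv'
    rw [S_cons s t (j+1) (j+1) le_rfl, S_empty s t (j+1) (j+2) (by omega),
        S_empty s t j (j+1) (by omega)]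
    simp [Nat.sub_self]
  | succ d ih =>
    intro v hv
    have hvj : v ≤ j := by omega
    have IH := ih (v+1) (by omega)
    rw [S_cons s t (j+1) v (by omega), S_cons s t j v hvj]
    have e1 : j + 1 - v = (j - v) + 1 := by omega
    have e2 : j + 1 - (v + 1) = j - v := by omega
    rw [e2] at IH
    rw [e1]
    set Sj1 := S s t j (v+1) with hSj1
    -- per-term identity
    have key : (j+1) * (s.choose v * t.choose ((j-v)+1)) + (v+1) * s.choose (v+1) * t.choose (j-v)
        = (s+t-j) * (s.choose v * t.choose (j-v)) + v * s.choose v * t.choose ((j-v)+1) := by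
      have h1 : s.choose (v+1) * (v+1) = s.choose v * (s - v) := Nat.choose_succ_right_eq s v
      have h2 : t.choose ((j-v)+1) * ((j-v)+1) = t.choose (j-v) * (t - (j-v)) :=
        Nat.choose_succ_right_eq t (j-v)
      by_cases hvs : v ≤ s
      · by_cases hjv : j - v ≤ t
        · have hjst : j ≤ s + t := by omega
          zify [hvs, hjv, hjst, hvj] at h1 h2 ⊢
          linear_combination (s.choose v : ℤ) * h2 + (t.choose (j-v) : ℤ) * h1
        · have b0 : t.choose (j-v) = 0 := Nat.choose_eq_zero_of_lt (by omega)
          have b1 : t.choose ((j-v)+1) = 0 := Nat.choose_eq_zero_of_lt (by omega)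
          simp [b0, b1]
      · have a0 : s.choose v = 0 := Nat.choose_eq_zero_of_lt (by omega)
        have a1 : s.choose (v+1) = 0 := Nat.choose_eq_zero_of_lt (by omega)
        simp [a0, a1]
    calc (j+1) * (s.choose v * t.choose ((j-v)+1) + S s t (j+1) (v+1))
        = (j+1) * (s.choose v * t.choose ((j-v)+1)) + (j+1) * S s t (j+1) (v+1) := by ring
      _ = (j+1) * (s.choose v * t.choose ((j-v)+1)) + ((s+t-j) * Sj1 + (v+1) * s.choose (v+1) * t.choose (j-v)) := by rw [IH]
      _ = ((j+1) * (s.choose v * t.choose ((j-v)+1)) + (v+1) * s.choose (v+1) * t.choose (j-v)) + (s+t-j) * Sj1 := by ring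
      _ = ((s+t-j) * (s.choose v * t.choose (j-v)) + v * s.choose v * t.choose ((j-v)+1)) + (s+t-j) * Sj1 := by rw [key]
      _ = (s+t-j) * (s.choose v * t.choose (j-v) + Sj1) + v * s.choose v * t.choose ((j-v)+1) := by ring

lemma ident' (s t j v : ℕ) (h : v ≤ j + 1) :
    (j+1) * S s t (j+1) v = (s+t-j) * S s t j v + v * s.choose v * t.choose (j+1-v) :=
  ident s t j (j+1-v) v (by omega)

lemma cc_zero (s t k l j : ℕ) (h : j < l) : cc s t k l j = 0 := by
  rw [cc]
  apply Finset.sum_eq_zero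
  intro i hi
  have hcond : ¬(l ≤ j - i ∧ j - i ≤ t - l) := by
    simp only [Finset.mem_range] at hi; omega
  exact mul_eq_zero_of_right _ (if_neg hcond)

lemma cc_eq_Icc (s t k l j : ℕ) (hl : 2*l ≤ t) (hlj : l ≤ j) :
    cc s t k l j =
      ∑ i ∈ Finset.Icc (max k (j - (t - l))) (min (s - k) (j - l)),
        s.choose i * t.choose (j - i) := by
  rw [cc]
  have h1 : ∀ i ∈ Finset.range (j+1),
      (if k ≤ i ∧ i ≤ s - k then s.choose i else 0) *
        (if l ≤ j - i ∧ j - i ≤ t - l then t.choose (j - i) else 0)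
      = if (k ≤ i ∧ i ≤ s - k) ∧ (l ≤ j - i ∧ j - i ≤ t - l)
          then s.choose i * t.choose (j - i) else 0 := by
    intro i _; exact ite_zero_mul_ite_zero _ _ _ _
  rw [Finset.sum_congr rfl h1, ← Finset.sum_filter]
  apply Finset.sum_congr _ (fun _ _ => rfl)
  ext a
  simp only [Finset.mem_filter, Finset.mem_range, Finset.mem_Icc, le_max_iff, max_le_iff,
    le_min_iff, min_le_iff]
  omega

lemma sum_split (f : ℕ → ℕ) (L U j : ℕ) (h1 : L ≤ U + 1) (h2 : U ≤ j) :
    ∑ i ∈ Finset.Icc L j, f i = ∑ i ∈ Finset.Icc L U, f i + ∑ i ∈ Finset.Icc (U+1) j, f i := by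
  rw [← Finset.Ico_add_one_right_eq_Icc L j, ← Finset.Ico_add_one_right_eq_Icc L U, ← Finset.Ico_add_one_right_eq_Icc (U+1) j]
  exact (Finset.sum_Ico_consecutive f h1 (by omega)).symm

/-- monotonicity of binomial coefficients below the middle -/
lemma choose_mono_half (m : ℕ) : ∀ y x, x ≤ y → 2*y ≤ m → m.choose x ≤ m.choose y := by
  intro y
  induction y with
  | zero =>
    intro x hx _
    have : x = 0 := by omega
    subst this; exact le_rfl
  | succ y ih =>
    intro x hx hy
    rcases Nat.lt_or_ge x (y+1) with h | h
    · calc m.choose x ≤ m.choose y := ih x (by omega) (by omega)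
        _ ≤ m.choose (y+1) := Nat.choose_le_succ_of_lt_half_left (by omega)
    · have : x = y + 1 := by omega
      subst this; exact le_rfl

lemma choose_le_choose (m a b : ℕ) (hba : b ≤ a) (hab : a + b ≤ m) :
    m.choose b ≤ m.choose a := by
  rcases le_or_gt (2*a) m with h | h
  · exact choose_mono_half m a b hba h
  · have ham : a ≤ m := by omega
    have : m.choose a = m.choose (m - a) := by
      rw [← Nat.choose_symm ham]
    rw [this]
    exact choose_mono_half m (m-a) b (by omega) (by omega)


set_option maxHeartbeats 2000000 in
lemma step (s t k l j : ℕ) (hk : 2*k ≤ s) (hl : 2*l ≤ t) (hj : 2*j+1 ≤ s+t) :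
    (s+t-j) * cc s t k l j ≤ (j+1) * cc s t k l (j+1) := by
  rcases lt_or_ge j l with hjl | hlj
  · rw [cc_zero s t k l j hjl, mul_zero]; exact Nat.zero_le _
  set L := max k (j - (t-l)) with hLdef
  set U := min (s-k) (j-l) with hUdef
  set L' := max k (j+1 - (t-l)) with hL'def
  set U' := min (s-k) (j+1-l) with hU'def
  have cL : k ≤ L ∧ j-(t-l) ≤ L ∧ (L = k ∨ L = j-(t-l)) :=
    ⟨le_max_left _ _, le_max_right _ _, max_choice _ _⟩
  have cU : U ≤ s-k ∧ U ≤ j-l ∧ (U = s-k ∨ U = j-l) :=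
    ⟨min_le_left _ _, min_le_right _ _, min_choice _ _⟩
  have cL' : k ≤ L' ∧ j+1-(t-l) ≤ L' ∧ (L' = k ∨ L' = j+1-(t-l)) :=
    ⟨le_max_left _ _, le_max_right _ _, max_choice _ _⟩
  have cU' : U' ≤ s-k ∧ U' ≤ j+1-l ∧ (U' = s-k ∨ U' = j+1-l) :=
    ⟨min_le_left _ _, min_le_right _ _, min_choice _ _⟩
  have hcj : cc s t k l j = ∑ i ∈ Finset.Icc L U, s.choose i * t.choose (j - i) :=
    cc_eq_Icc s t k l j hl hlj
  have hcj1 : cc s t k l (j+1) = ∑ i ∈ Finset.Icc L' U', s.choose i * t.choose (j+1-i) :=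
    cc_eq_Icc s t k l (j+1) hl (by omega)
  rcases lt_or_ge U L with hUL | hLU
  · rw [hcj, Finset.Icc_eq_empty (by omega), Finset.sum_empty, mul_zero]; exact Nat.zero_le _
  have hUj : U ≤ j := by omega
  have hE1 : S s t j L = cc s t k l j + S s t j (U+1) := by
    rw [hcj, S, S]; exact sum_split _ L U j (by omega) hUj
  by_cases hA : l = 0 ∧ j < s - k
  · -- case A : no upper truncation
    have hU'A : U' = j + 1 := by omega
    have hUA : U = j := by omega
    have hE2 : S s t (j+1) L' = cc s t k l (j+1) := by
      rw [hcj1, S, hU'A]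
    have hSU0 : S s t j (U+1) = 0 := S_empty s t j (U+1) (by omega)
    have hI1 := ident' s t j L' (by omega)
    rw [hE2] at hI1
    rcases (by omega : L' = L ∨ L' = L + 1) with hc | hc
    · rw [hc] at hI1
      have h1 : (s+t-j) * cc s t k l j ≤ (s+t-j) * S s t j L := by
        rw [hE1]
        exact Nat.mul_le_mul_left _ (Nat.le_add_right _ _)
      refine h1.trans ?_
      rw [hI1]
      exact Nat.le_add_right _ _
    · have hLv : L = j - t := by omega
      have hjt : t ≤ j := by omega
      have hE4 : S s t j L = s.choose L * t.choose (j-L) + S s t j (L+1) :=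
        S_cons s t j L (by omega)
      rw [hc] at hI1
      have e5 : j + 1 - (L+1) = j - L := by omega
      rw [e5] at hI1
      have r2 : (L+1) * s.choose (L+1) * t.choose (j-L)
          = (s-L) * (s.choose L * t.choose (j-L)) := by
        have h := Nat.choose_succ_right_eq s L
        calc (L+1) * s.choose (L+1) * t.choose (j-L)
            = (s.choose (L+1) * (L+1)) * t.choose (j-L) := by ring
          _ = (s.choose L * (s-L)) * t.choose (j-L) := by rw [h]
          _ = (s-L) * (s.choose L * t.choose (j-L)) := by ring
      have hsL : s - L = s + t - j := by omega
      rw [r2, hsL] at hI1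
      calc (s+t-j) * cc s t k l j
          = (s+t-j) * (S s t j L) := by rw [hE1, hSU0, Nat.add_zero]
        _ = (s+t-j) * S s t j (L+1) + (s+t-j) * (s.choose L * t.choose (j-L)) := by
            rw [hE4]; ring
        _ = (j+1) * cc s t k l (j+1) := hI1.symm
        _ ≤ (j+1) * cc s t k l (j+1) := le_rfl
  · -- case B
    have hU'j : U' ≤ j := by omega
    have hE2 : S s t (j+1) L' = cc s t k l (j+1) + S s t (j+1) (U'+1) := by
      rw [hcj1, S, S]; exact sum_split _ L' U' (j+1) (by omega) (by omega)
    have hI1 := ident' s t j L' (by omega)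
    have hI2 := ident' s t j (U'+1) (by omega)
    have e6 : j + 1 - (U'+1) = j - U' := by omega
    rw [e6] at hI2
    have hM : (j+1) * cc s t k l (j+1) + ((s+t-j) * S s t j (U'+1)
          + (U'+1) * s.choose (U'+1) * t.choose (j-U'))
        = (s+t-j) * S s t j L' + L' * s.choose L' * t.choose (j+1-L') := by
      have h := congrArg (fun x => (j+1) * x) hE2
      simp only [mul_add] at h
      rw [hI1, hI2] at h
      linarith [h]
    have hN : (s+t-j) * S s t j L
        = (s+t-j) * cc s t k l j + (s+t-j) * S s t j (U+1) := by
      rw [hE1, mul_add]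
    rcases (by omega : (L' = L ∨ L' = L + 1) ∧ (U' = U ∨ U' = U + 1)) with ⟨hLc | hLc, hUc | hUc⟩
    · -- B1
      have hLk : L = k := by omega
      have hUk : U = s - k := by omega
      rw [hLc, hUc] at hM
      have key : (U+1) * s.choose (U+1) * t.choose (j-U)
          ≤ L * s.choose L * t.choose (j+1-L) := by
        rw [hLk, hUk]
        by_cases hk0 : k = 0
        · have : s.choose (s-k+1) = 0 := Nat.choose_eq_zero_of_lt (by omega)
          simp [this]
        · have hsym : s.choose (s-k+1) = s.choose (k-1) := by
            rw [show s-k+1 = s-(k-1) by omega, Nat.choose_symm (by omega)]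
          have hup : s.choose k * k = s.choose (k-1) * (s-k+1) := by
            have h := Nat.choose_succ_right_eq s (k-1)
            rwa [show k-1+1 = k by omega, show s-(k-1) = s-k+1 by omega] at h
          have hcho : t.choose (j-(s-k)) ≤ t.choose (j+1-k) :=
            choose_le_choose t (j+1-k) (j-(s-k)) (by omega) (by omega)
          calc (s-k+1) * s.choose (s-k+1) * t.choose (j-(s-k))
              = (s.choose (k-1) * (s-k+1)) * t.choose (j-(s-k)) := by rw [hsym]; ring
            _ = (s.choose k * k) * t.choose (j-(s-k)) := by rw [hup]
            _ ≤ (s.choose k * k) * t.choose (j+1-k) := Nat.mul_le_mul_left _ hcho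
            _ = k * s.choose k * t.choose (j+1-k) := by ring
      linarith [hM, hN, key, Nat.zero_le (L * s.choose L * t.choose (j+1-L)), Nat.zero_le ((U+1) * s.choose (U+1) * t.choose (j-U))]
    · -- B2
      have hLk : L = k := by omega
      have hUv : U = j - l := by omega
      have hl1 : 1 ≤ l := by omega
      have hE3 : S s t j (U+1) = s.choose (U+1) * t.choose (j-(U+1)) + S s t j (U+2) :=
        S_cons s t j (U+1) (by omega)
      have hNE3 : (s+t-j) * S s t j (U+1)
          = (s+t-j) * (s.choose (U+1) * t.choose (j-(U+1))) + (s+t-j) * S s t j (U+2) := by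
        rw [hE3, mul_add]
      rw [hLc, hUc] at hM
      rw [show U+1+1 = U+2 from by omega] at hM
      have e7 : j - (U+1) = j - U - 1 := by omega
      have key : (U+2) * s.choose (U+2) * t.choose (j-(U+1))
          ≤ (s+t-j) * (s.choose (U+1) * t.choose (j-(U+1))) := by
        have h := Nat.choose_succ_right_eq s (U+1)
        have hle : s-(U+1) ≤ s+t-j := by omega
        calc (U+2) * s.choose (U+2) * t.choose (j-(U+1))
            = (s.choose (U+2) * (U+2)) * t.choose (j-(U+1)) := by ring
          _ = (s.choose (U+1) * (s-(U+1))) * t.choose (j-(U+1)) := by rw [h]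
          _ ≤ (s.choose (U+1) * (s+t-j)) * t.choose (j-(U+1)) :=
              Nat.mul_le_mul_right _ (Nat.mul_le_mul_left _ hle)
          _ = (s+t-j) * (s.choose (U+1) * t.choose (j-(U+1))) := by ring
      linarith [hM, hN, hNE3, key, Nat.zero_le (L * s.choose L * t.choose (j+1-L))]
    · -- B4 : impossible
      exfalso; omega
    · -- B3
      have hUv : U = j - l := by omega
      have hl1 : 1 ≤ l := by omega
      have hLv : L = j - (t-l) := by omega
      have htlj : t - l ≤ j := by omega
      have hLs : L ≤ s := by omega
      have hE3 : S s t j (U+1) = s.choose (U+1) * t.choose (j-(U+1)) + S s t j (U+2) :=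
        S_cons s t j (U+1) (by omega)
      have hNE3 : (s+t-j) * S s t j (U+1)
          = (s+t-j) * (s.choose (U+1) * t.choose (j-(U+1))) + (s+t-j) * S s t j (U+2) := by
        rw [hE3, mul_add]
      have hE4 : S s t j L = s.choose L * t.choose (j-L) + S s t j (L+1) :=
        S_cons s t j L (by omega)
      have hNE4 : (s+t-j) * S s t j L
          = (s+t-j) * (s.choose L * t.choose (j-L)) + (s+t-j) * S s t j (L+1) := by
        rw [hE4, mul_add]
      rw [hLc, hUc] at hM
      rw [show U+1+1 = U+2 from by omega] at hM
      have e8 : j + 1 - (L+1) = j - L := by omega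
      rw [e8] at hM
      have r1 : (U+2) * s.choose (U+2) * t.choose (j-(U+1))
          = (s-(U+1)) * (s.choose (U+1) * t.choose (j-(U+1))) := by
        have h := Nat.choose_succ_right_eq s (U+1)
        calc (U+2) * s.choose (U+2) * t.choose (j-(U+1))
            = (s.choose (U+2) * (U+2)) * t.choose (j-(U+1)) := by ring
          _ = (s.choose (U+1) * (s-(U+1))) * t.choose (j-(U+1)) := by rw [h]
          _ = (s-(U+1)) * (s.choose (U+1) * t.choose (j-(U+1))) := by ring
      have r2 : (L+1) * s.choose (L+1) * t.choose (j-L)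
          = (s-L) * (s.choose L * t.choose (j-L)) := by
        have h := Nat.choose_succ_right_eq s L
        calc (L+1) * s.choose (L+1) * t.choose (j-L)
            = (s.choose (L+1) * (L+1)) * t.choose (j-L) := by ring
          _ = (s.choose L * (s-L)) * t.choose (j-L) := by rw [h]
          _ = (s-L) * (s.choose L * t.choose (j-L)) := by ring
      have q1 : (s+t-j) * (s.choose (U+1) * t.choose (j-(U+1)))
          = (s-(U+1)) * (s.choose (U+1) * t.choose (j-(U+1)))
            + (t-l+1) * (s.choose (U+1) * t.choose (j-(U+1))) := by
        rw [← Nat.add_mul]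
        congr 1
        omega
      have q2 : (s-L) * (s.choose L * t.choose (j-L)) + l * (s.choose L * t.choose (j-L))
          = (s+t-j) * (s.choose L * t.choose (j-L)) := by
        rw [← Nat.add_mul]
        congr 1
        omega
      have key : l * (s.choose L * t.choose (j-L))
          ≤ (t-l+1) * (s.choose (U+1) * t.choose (j-(U+1))) := by
        have e9 : j - L = t - l := by omega
        have e10 : j - (U+1) = l - 1 := by omega
        have hsymt : t.choose (t-l) = t.choose l := Nat.choose_symm (by omega)
        have hupt : t.choose l * l = t.choose (l-1) * (t-l+1) := by
          have h := Nat.choose_succ_right_eq t (l-1)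
          rwa [show l-1+1 = l by omega, show t-(l-1) = t-l+1 by omega] at h
        have hchs : s.choose L ≤ s.choose (U+1) :=
          choose_le_choose s (U+1) L (by omega) (by omega)
        rw [e9, e10, hsymt]
        calc l * (s.choose L * t.choose l)
            = s.choose L * (t.choose l * l) := by ring
          _ = s.choose L * (t.choose (l-1) * (t-l+1)) := by rw [hupt]
          _ ≤ s.choose (U+1) * (t.choose (l-1) * (t-l+1)) :=
              Nat.mul_le_mul_right _ hchs
          _ = (t-l+1) * (s.choose (U+1) * t.choose (l-1)) := by ring
      linarith [hM, hN, hNE3, hNE4, r1, r2, q1, q2, key, Nat.zero_le (L * s.choose L * t.choose (j+1-L))]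
lemma cc_form (s t k l j : ℕ) :
    cc s t k l j = ∑ i ∈ Finset.range (s+1),
      (if k ≤ i ∧ i ≤ s - k ∧ l + i ≤ j ∧ j ≤ t - l + i
        then s.choose i * t.choose (j - i) else 0) := by
  rw [cc]
  have h1 : ∀ i ∈ Finset.range (j+1),
      (if k ≤ i ∧ i ≤ s - k then s.choose i else 0) *
        (if l ≤ j - i ∧ j - i ≤ t - l then t.choose (j - i) else 0)
      = if k ≤ i ∧ i ≤ s - k ∧ l + i ≤ j ∧ j ≤ t - l + i
          then s.choose i * t.choose (j - i) else 0 := by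
    intro i hi
    simp only [Finset.mem_range] at hi
    rw [ite_zero_mul_ite_zero]
    refine if_congr ?_ rfl rfl
    constructor <;> (intro h; constructor <;> try constructor) <;> omega
  rw [Finset.sum_congr rfl h1]
  have e1 : ∑ i ∈ Finset.range (j+1), (fun i => if k ≤ i ∧ i ≤ s - k ∧ l + i ≤ j ∧ j ≤ t - l + i
        then s.choose i * t.choose (j - i) else 0) i
      = ∑ i ∈ Finset.range (j+s+2), (fun i => if k ≤ i ∧ i ≤ s - k ∧ l + i ≤ j ∧ j ≤ t - l + i
        then s.choose i * t.choose (j - i) else 0) i := by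
    apply Finset.sum_subset
    · intro x hx; simp only [Finset.mem_range] at *; omega
    · intro x _ hx
      simp only [Finset.mem_range, not_lt] at hx
      exact if_neg (by omega)
  have e2 : ∑ i ∈ Finset.range (s+1), (fun i => if k ≤ i ∧ i ≤ s - k ∧ l + i ≤ j ∧ j ≤ t - l + i
        then s.choose i * t.choose (j - i) else 0) i
      = ∑ i ∈ Finset.range (j+s+2), (fun i => if k ≤ i ∧ i ≤ s - k ∧ l + i ≤ j ∧ j ≤ t - l + i
        then s.choose i * t.choose (j - i) else 0) i := by
    apply Finset.sum_subset
    · intro x hx; simp only [Finset.mem_range] at *; omega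
    · intro x _ hx
      simp only [Finset.mem_range, not_lt] at hx
      exact if_neg (by omega)
  rw [e1, ← e2]

lemma cc_symm (s t k l j : ℕ) (hk : 2*k ≤ s) (hl : 2*l ≤ t) (hj : j ≤ s + t) :
    cc s t k l j = cc s t k l (s+t-j) := by
  rw [cc_form s t k l j, cc_form s t k l (s+t-j)]
  conv_rhs => rw [← Finset.sum_range_reflect]
  refine Finset.sum_congr rfl fun i hi => ?_
  simp only [Finset.mem_range] at hi
  have hi' : i ≤ s := by omega
  have es : s + 1 - 1 - i = s - i := by omega
  rw [es]
  by_cases hc : k ≤ i ∧ i ≤ s - k ∧ l + i ≤ j ∧ j ≤ t - l + i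
  · have hc2 : k ≤ s - i ∧ s - i ≤ s - k ∧ l + (s - i) ≤ s + t - j ∧ s + t - j ≤ t - l + (s - i) := by omega
    rw [if_pos hc, if_pos hc2]
    have v1 : s.choose (s-i) = s.choose i := Nat.choose_symm hi'
    have v2 : (s+t-j) - (s-i) = t - (j-i) := by omega
    have v3 : t.choose (t-(j-i)) = t.choose (j-i) := Nat.choose_symm (by omega)
    rw [v1, v2, v3]
  · have hc2 : ¬(k ≤ s - i ∧ s - i ≤ s - k ∧ l + (s - i) ≤ s + t - j ∧ s + t - j ≤ t - l + (s - i)) := by omega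
    rw [if_neg hc, if_neg hc2]

lemma cast_cc (s t k l j : ℕ) :
    ((cc s t k l j : ℝ)) = ∑ i ∈ Finset.range (j+1),
      ((if k ≤ i ∧ i ≤ s - k then (s.choose i : ℝ) else 0) *
        (if l ≤ j - i ∧ j - i ≤ t - l then (t.choose (j-i) : ℝ) else 0)) := by
  rw [cc, Nat.cast_sum]
  refine Finset.sum_congr rfl fun i _ => ?_
  rw [Nat.cast_mul, apply_ite (Nat.cast : ℕ → ℝ), apply_ite (Nat.cast : ℕ → ℝ), Nat.cast_zero]

lemma mono_step (s t k l j : ℕ) (hk : 2*k ≤ s) (hl : 2*l ≤ t) (hj : 2*j+1 ≤ s+t) :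
    (cc s t k l j : ℝ) / ((s+t).choose j : ℝ)
      ≤ (cc s t k l (j+1) : ℝ) / ((s+t).choose (j+1) : ℝ) := by
  have h1 := step s t k l j hk hl hj
  have hp0 : 0 < (((s+t).choose j : ℕ) : ℝ) := by
    exact_mod_cast Nat.choose_pos (show j ≤ s+t by omega)
  have hp1 : 0 < (((s+t).choose (j+1) : ℕ) : ℝ) := by
    exact_mod_cast Nat.choose_pos (show j+1 ≤ s+t by omega)
  rw [div_le_div_iff₀ hp0 hp1]
  have h2 : cc s t k l j * (s+t).choose (j+1) ≤ cc s t k l (j+1) * (s+t).choose j := by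
    have e : (s+t).choose (j+1) * (j+1) = (s+t).choose j * (s+t-j) :=
      Nat.choose_succ_right_eq (s+t) j
    apply Nat.le_of_mul_le_mul_left ?_ (show 0 < j+1 by omega)
    calc (j+1) * (cc s t k l j * (s+t).choose (j+1))
        = cc s t k l j * ((s+t).choose (j+1) * (j+1)) := by ring
      _ = cc s t k l j * ((s+t).choose j * (s+t-j)) := by rw [e]
      _ = ((s+t-j) * cc s t k l j) * (s+t).choose j := by ring
      _ ≤ ((j+1) * cc s t k l (j+1)) * (s+t).choose j := Nat.mul_le_mul_right _ h1
      _ = (j+1) * (cc s t k l (j+1) * (s+t).choose j) := by ring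
  exact_mod_cast h2

end ConvUU

open ConvUU in
theorem conv_basic_ultraUnimodal (s t k l : ℕ) (hk : 2 * k ≤ s) (hl : 2 * l ≤ t) :
    UnimodalOn
      (fun j => (∑ i ∈ Finset.range (j + 1),
          ((if k ≤ i ∧ i ≤ s - k then (s.choose i : ℝ) else 0) *
            (if l ≤ j - i ∧ j - i ≤ t - l then (t.choose (j - i) : ℝ) else 0))) /
        ((s + t).choose j : ℝ))
      (s + t) := by
  have hb : ∀ j, (∑ i ∈ Finset.range (j + 1),
          ((if k ≤ i ∧ i ≤ s - k then (s.choose i : ℝ) else 0) *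
            (if l ≤ j - i ∧ j - i ≤ t - l then (t.choose (j - i) : ℝ) else 0))) /
        ((s + t).choose j : ℝ) = (cc s t k l j : ℝ) / ((s+t).choose j : ℝ) := by
    intro j; rw [cast_cc]
  have hd : ∀ j, j ≤ s + t → (cc s t k l j : ℝ) / ((s+t).choose j : ℝ)
      = (cc s t k l (s+t-j) : ℝ) / ((s+t).choose (s+t-j) : ℝ) := by
    intro j hj
    rw [← cc_symm s t k l j hk hl hj, Nat.choose_symm hj]
  refine ⟨(s+t+1)/2, by omega, ?_, ?_⟩
  · intro i hi
    simp only []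
    rw [hb, hb]
    exact mono_step s t k l i hk hl (by omega)
  · intro i hmi hin
    simp only []
    rw [hb, hb]
    have e1 : i + 1 ≤ s + t := by omega
    have e2 : i ≤ s + t := by omega
    rw [hd (i+1) e1, hd i e2]
    have e3 : s + t - (i+1) + 1 = s + t - i := by omega
    have h := mono_step s t k l (s+t-(i+1)) hk hl (by omega)
    rwa [e3] at h
end

section
/- Let l ≤ n/2, let P_i(j) = ∑_{k=0}^i (−1)^{i−k} C(l−k, i−k) C(l−j, k) C(n−l+k−j, k) be the eigenvalues of the Johnson scheme, and set β_i = (i(n+1) − l(l+1))/(l − i + 1) for 0 ≤ i ≤ l. Then ∑_{i=0}^l β_{l−i} P_i(j) ≥ 0 for all 1 ≤ j ≤ l, with equality when j = 0. -/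
/-- Eigenvalues of the Johnson scheme. -/
noncomputable def JohnsonP (n l i j : ℕ) : ℝ :=
  ∑ k ∈ Finset.range (i + 1),
    (-1 : ℝ) ^ (i - k) * ((l - k).choose (i - k)) * ((l - j).choose k) *
      ((n - l + k - j).choose k)

/-- `β_i = (i(n+1) − l(l+1))/(l − i + 1)`. -/
noncomputable def betaCoef (n l i : ℕ) : ℝ :=
  ((i : ℝ) * (n + 1) - l * (l + 1)) / ((l : ℝ) - i + 1)

/-!
Exchanging the two summations writes `∑ᵢ β_{l-i} P_i(j)` as `∑ₖ A_k C(l-j,k) C(n-l+k-j,k)`,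
where `A_k` is an alternating binomial sum of the `β`'s. Since
`β_{l-i} = (l+1)(n-l+1)/(i+1) - (n+1)` and `∑ₘ (-1)^m C(r,m)/(k+m+1) = k! r!/(k+r+1)!`
(a Beta integral), `A_k = (n-l+1)/C(l,k) - (n+1)[k = l]`. For `j ≥ 1` the `k = l` term
vanishes and all other terms are nonnegative; for `j = 0` the hockey-stick identity turns the sum
into `(n-l+1) C(n+1,l) - (n+1) C(n,l) = 0`.
-/

open Finset Nat

theorem sum_neg_one_pow_mul_choose_succ {R : Type*} [CommRing R] (r : ℕ) (g : ℕ → R) :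
    ∑ m ∈ range (r + 2), (-1) ^ m * ((r + 1).choose m : R) * g m =
      ∑ m ∈ range (r + 1), (-1) ^ m * (r.choose m : R) * (g m - g (m + 1)) := by
  have hr : ∑ m ∈ range (r + 2), (-1) ^ m * (r.choose m : R) * g m =
      ∑ m ∈ range (r + 1), (-1) ^ m * (r.choose m : R) * g m := by
    rw [sum_range_succ, choose_succ_self, cast_zero, mul_zero, zero_mul, add_zero]
  rw [sum_range_succ'] at hr ⊢
  simp only [choose_succ_succ', cast_add, mul_add, add_mul, sum_add_distrib, mul_sub,
    sum_sub_distrib, choose_zero_right] at hr ⊢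
  rw [← hr]
  simp only [pow_succ, mul_neg_one, neg_mul, sum_neg_distrib]
  ring

theorem sum_neg_one_pow_mul_choose_div {𝕜 : Type*} [Field 𝕜] [CharZero 𝕜] (r k : ℕ) :
    ∑ m ∈ range (r + 1), (-1) ^ m * (r.choose m : 𝕜) / (k + m + 1) =
      k ! * r ! / (k + r + 1)! := by
  induction r generalizing k with
  | zero =>
    have hk : (k ! : 𝕜) ≠ 0 := cast_ne_zero.mpr (factorial_ne_zero k)
    simp [factorial_succ]
    field_simp
  | succ r ih =>
    have hstep : ∑ m ∈ range (r + 2), (-1) ^ m * ((r + 1).choose m : 𝕜) / (k + m + 1) =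
        ∑ m ∈ range (r + 1), (-1) ^ m * (r.choose m : 𝕜) / (k + m + 1) -
          ∑ m ∈ range (r + 1), (-1) ^ m * (r.choose m : 𝕜) / ((k + 1 : ℕ) + m + 1) := by
      simp only [div_eq_mul_inv, sum_neg_one_pow_mul_choose_succ, mul_sub, sum_sub_distrib]
      push_cast
      ring_nf
    rw [hstep, ih, ih, show k + 1 + r + 1 = k + r + 1 + 1 by ring,
      show k + (r + 1) + 1 = k + r + 1 + 1 by ring, factorial_succ (k + r + 1), factorial_succ k,
      factorial_succ r]
    have hf : ((k + r + 1)! : 𝕜) ≠ 0 := cast_ne_zero.mpr (factorial_ne_zero _)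
    have hs : (k + r + 1 + 1 : 𝕜) ≠ 0 := by exact_mod_cast succ_ne_zero (k + r + 1)
    push_cast
    field_simp
    ring

theorem Nat.sum_range_add_choose_self (a l : ℕ) :
    ∑ k ∈ range (l + 1), (a + k).choose k = (a + l + 1).choose l := by
  calc ∑ k ∈ range (l + 1), (a + k).choose k
      = ∑ k ∈ range (l + 1), (k + a).choose a := sum_congr rfl fun k _ => by
        rw [add_comm, choose_symm_add]
    _ = (a + l + 1).choose l := by
        rw [sum_range_add_choose, choose_symm_of_eq_add (by ring), add_comm l a]

theorem betaCoef_sub (n l i : ℕ) (hi : i ≤ l) :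
    betaCoef n l (l - i) = (l + 1) * ((n : ℝ) - l + 1) / (i + 1) - (n + 1) := by
  have hi' : (i + 1 : ℝ) ≠ 0 := by positivity
  rw [betaCoef, cast_sub hi]
  field_simp
  ring

theorem sum_neg_one_pow_mul_choose_mul_betaCoef (n l k : ℕ) (hk : k ≤ l) :
    ∑ m ∈ range (l - k + 1), (-1 : ℝ) ^ m * (l - k).choose m * betaCoef n l (l - (k + m)) =
      ((n : ℝ) - l + 1) / l.choose k - if k = l then (n + 1 : ℝ) else 0 := by
  have hterm : ∀ m ∈ range (l - k + 1),
      (-1 : ℝ) ^ m * (l - k).choose m * betaCoef n l (l - (k + m)) =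
        (l + 1) * ((n : ℝ) - l + 1) * ((-1) ^ m * (l - k).choose m / (k + m + 1)) -
          (n + 1) * ((-1) ^ m * (l - k).choose m) := by
    intro m hm
    rw [betaCoef_sub n l (k + m) (by grind)]
    push_cast
    ring
  have halt : ∑ m ∈ range (l - k + 1), (-1 : ℝ) ^ m * (l - k).choose m =
      if k = l then 1 else 0 := by
    have h := Int.alternating_sum_range_choose (n := l - k)
    rw [if_congr (by omega : l - k = 0 ↔ k = l) rfl rfl] at h
    exact_mod_cast h
  rw [sum_congr rfl hterm, sum_sub_distrib, ← mul_sum, ← mul_sum, halt,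
    sum_neg_one_pow_mul_choose_div, add_tsub_cancel_of_le hk, cast_choose ℝ hk,
    factorial_succ, mul_ite, mul_one, mul_zero]
  congr 1
  push_cast
  field_simp

theorem sum_betaCoef_mul_johnsonP (n l j : ℕ) :
    ∑ i ∈ range (l + 1), betaCoef n l (l - i) * JohnsonP n l i j =
      ∑ k ∈ range (l + 1), (((n : ℝ) - l + 1) / l.choose k - if k = l then (n + 1 : ℝ) else 0) *
        (l - j).choose k * (n - l + k - j).choose k := by
  simp_rw [JohnsonP, mul_sum, range_eq_Ico]
  rw [← sum_Ico_Ico_comm]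
  refine sum_congr rfl fun k hk => ?_
  rw [mem_Ico] at hk
  rw [← sum_neg_one_pow_mul_choose_mul_betaCoef n l k (by omega), sum_mul, sum_mul,
    sum_Ico_eq_sum_range, show l + 1 - k = l - k + 1 by omega]
  refine sum_congr rfl fun m _ => ?_
  rw [add_tsub_cancel_left]
  ring

theorem sum_betaCoef_mul_johnsonP_nonneg (n l j : ℕ) (hln : l ≤ n + 1) (hj : 1 ≤ j)
    (hjl : j ≤ l) : 0 ≤ ∑ i ∈ range (l + 1), betaCoef n l (l - i) * JohnsonP n l i j := by
  have hnl : (0 : ℝ) ≤ n - l + 1 := by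
    have := (cast_le (α := ℝ)).mpr hln
    push_cast at this
    linarith
  rw [sum_betaCoef_mul_johnsonP]
  refine sum_nonneg fun k _ => ?_
  rcases eq_or_ne k l with rfl | hkl
  · rw [choose_eq_zero_of_lt (by omega : k - j < k)]
    simp
  · rw [if_neg hkl, sub_zero]
    exact mul_nonneg (mul_nonneg (div_nonneg hnl (cast_nonneg _)) (cast_nonneg _)) (cast_nonneg _)

theorem sum_betaCoef_mul_johnsonP_zero (n l : ℕ) (hln : l ≤ n) :
    ∑ i ∈ range (l + 1), betaCoef n l (l - i) * JohnsonP n l i 0 = 0 := by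
  have hterm : ∀ k ∈ range (l + 1),
      (((n : ℝ) - l + 1) / l.choose k - if k = l then (n + 1 : ℝ) else 0) *
          l.choose k * (n - l + k).choose k =
        ((n : ℝ) - l + 1) * (n - l + k).choose k -
          if k = l then (n + 1 : ℝ) * n.choose l else 0 := by
    intro k hk
    have : (l.choose k : ℝ) ≠ 0 := cast_ne_zero.mpr (choose_pos (by grind)).ne'
    split_ifs with hkl
    · subst hkl
      rw [choose_self, tsub_add_cancel_of_le hln]
      field_simp
      ring
    · rw [sub_zero, sub_zero]
      field_simp
  have hpascal := congrArg (Nat.cast : ℕ → ℝ) (choose_mul_succ_eq n l)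
  push_cast [cast_sub (by omega : l ≤ n + 1)] at hpascal
  rw [sum_betaCoef_mul_johnsonP]
  simp only [tsub_zero]
  rw [sum_congr rfl hterm, sum_sub_distrib, sum_ite_eq', if_pos (self_mem_range_succ l), ← mul_sum,
    ← cast_sum, Nat.sum_range_add_choose_self, tsub_add_cancel_of_le hln]
  linarith

theorem johnson_beta_sum_nonneg_general (n l : ℕ) (h2l : 2 * l ≤ n) :
    (∀ j, 1 ≤ j → j ≤ l →
        0 ≤ ∑ i ∈ Finset.range (l + 1), betaCoef n l (l - i) * JohnsonP n l i j) ∧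
      ∑ i ∈ Finset.range (l + 1), betaCoef n l (l - i) * JohnsonP n l i 0 = 0 :=
  ⟨fun j hj hjl => sum_betaCoef_mul_johnsonP_nonneg n l j (by omega) hj hjl,
    sum_betaCoef_mul_johnsonP_zero n l (by omega)⟩

theorem johnson_beta_sum_nonneg (n l : ℕ) (hn : 0 < n) (hl : 0 < l) (h2l : 2 * l ≤ n) :
    (∀ j, 1 ≤ j → j ≤ l →
        0 ≤ ∑ i ∈ Finset.range (l + 1), betaCoef n l (l - i) * JohnsonP n l i j) ∧
      ∑ i ∈ Finset.range (l + 1), betaCoef n l (l - i) * JohnsonP n l i 0 = 0 :=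
  johnson_beta_sum_nonneg_general n l h2l
end

section
/- Fix positive integers n, l, j, k with 2l ≤ n, 1 ≤ j ≤ l, and 0 ≤ k ≤ l − 1. Then ∑_{t=0}^{l−k} (−1)^t (((l−t−k)(n+1) − l(l+1))/(t+k+1)) C(l−k, t) = ((n−l+1)(l+1)/(k+1)) · C(l+1, k+1)^{-1}, which is positive. -/
/-!
Write `m = l - k`. The numerator splits as `(l + 1)(n + 1 - l) - (t + k + 1)(n + 1)`, so the sum is
`(l + 1)(n + 1 - l)` times `∑ₜ (-1)ᵗ C(m, t) / (t + k + 1)` minus `(n + 1)` times the alternating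
sum of `C(m, t)`, which vanishes since `m ≥ 1`. The remaining sum is the Beta integral
`∫₀¹ xᵏ (1 - x)ᵐ dx = m! k! / (m + k + 1)!`, proved here by induction on `m` through Pascal's rule.
-/

open Finset Nat

variable {K : Type*} [Field K] [CharZero K]

theorem sum_range_succ_alternating_choose_mul (f : ℕ → K) (m : ℕ) :
    ∑ t ∈ range (m + 2), (-1 : K) ^ t * (m + 1).choose t * f t =
      ∑ t ∈ range (m + 1), (-1 : K) ^ t * m.choose t * (f t - f (t + 1)) := by
  have hlast : ∑ t ∈ range (m + 2), (-1 : K) ^ t * m.choose t * f t =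
      ∑ t ∈ range (m + 1), (-1 : K) ^ t * m.choose t * f t := by
    simp [sum_range_succ _ (m + 1)]
  simp only [mul_sub, sum_sub_distrib]
  rw [← hlast, sum_range_succ', sum_range_succ' _ (m + 1)]
  simp only [Nat.choose_succ_succ', Nat.cast_add, choose_zero_right, pow_succ, mul_neg_one,
    neg_mul, mul_add, add_mul, sum_add_distrib, sum_neg_distrib]
  ring

theorem sum_range_alternating_choose_div_eq_factorial (m k : ℕ) :
    ∑ t ∈ range (m + 1), (-1 : K) ^ t * m.choose t / (t + k + 1) =
      m ! * k ! / (m + k + 1)! := by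
  induction m generalizing k with
  | zero =>
    have : (k ! : K) ≠ 0 := by exact_mod_cast factorial_ne_zero k
    simp [factorial_succ]
    field_simp
  | succ m ih =>
    have hstep : ∑ t ∈ range (m + 2), (-1 : K) ^ t * (m + 1).choose t / (t + k + 1) =
        ∑ t ∈ range (m + 1), (-1 : K) ^ t * m.choose t / (t + k + 1) -
          ∑ t ∈ range (m + 1), (-1 : K) ^ t * m.choose t / (t + (k + 1 : ℕ) + 1) := by
      simp only [div_eq_mul_inv, sum_range_succ_alternating_choose_mul, ← sum_sub_distrib]
      refine sum_congr rfl fun t _ => ?_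
      push_cast
      ring
    rw [hstep, ih, ih, show m + (k + 1) + 1 = m + k + 1 + 1 by ring,
      show m + 1 + k + 1 = m + k + 1 + 1 by ring, factorial_succ (m + k + 1), factorial_succ k,
      factorial_succ m]
    have : ((m + k + 1)! : K) ≠ 0 := by exact_mod_cast factorial_ne_zero _
    have : (m + k + 1 + 1 : K) ≠ 0 := by exact_mod_cast succ_ne_zero (m + k + 1)
    push_cast
    field_simp
    ring

theorem factorial_mul_factorial_div_factorial_eq_inv_choose (m k : ℕ) :
    (m ! * k ! / (m + k + 1)! : K) = ((k + 1 : K) * (m + k + 1).choose (k + 1))⁻¹ := by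
  rw [Nat.cast_choose K (by omega : k + 1 ≤ m + k + 1), show m + k + 1 - (k + 1) = m by omega,
    factorial_succ k]
  have : (k ! : K) ≠ 0 := by exact_mod_cast factorial_ne_zero k
  have : (m ! : K) ≠ 0 := by exact_mod_cast factorial_ne_zero m
  have : (k + 1 : K) ≠ 0 := by exact_mod_cast succ_ne_zero k
  push_cast
  field_simp

theorem inner_sum_positive_general (n l k : ℕ) (hl : 0 < l) (h2l : 2 * l ≤ n) (hk : k ≤ l - 1) :
    ∑ t ∈ Finset.range (l - k + 1),
        (-1 : ℝ) ^ t * ((((l : ℝ) - t - k) * (n + 1) - l * (l + 1)) / ((t : ℝ) + k + 1)) *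
          ((l - k).choose t) =
      ((n : ℝ) - l + 1) * (l + 1) / (k + 1) * (((l + 1).choose (k + 1) : ℝ))⁻¹ ∧
    0 < ((n : ℝ) - l + 1) * (l + 1) / (k + 1) * (((l + 1).choose (k + 1) : ℝ))⁻¹ := by
  set m := l - k
  have hml : m + k = l := by omega
  have hsplit : ∀ t ∈ range (m + 1),
      (-1 : ℝ) ^ t * ((((l : ℝ) - t - k) * (n + 1) - l * (l + 1)) / ((t : ℝ) + k + 1)) *
          (m.choose t) =
        ((l : ℝ) + 1) * (n - l + 1) * ((-1) ^ t * m.choose t / (t + k + 1)) -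
          (n + 1) * ((-1) ^ t * m.choose t) := by
    intro t _
    have : (t + k + 1 : ℝ) ≠ 0 := by positivity
    field_simp
    ring
  have halternating : ∑ t ∈ range (m + 1), (-1 : ℝ) ^ t * m.choose t = 0 := by
    exact_mod_cast Int.alternating_sum_range_choose_of_ne (by omega : m ≠ 0)
  have hnl : (0 : ℝ) < n - l + 1 := by
    have : (l : ℝ) ≤ n := by exact_mod_cast (by omega : l ≤ n)
    linarith
  have hchoose : (0 : ℝ) < (l + 1).choose (k + 1) := by
    exact_mod_cast Nat.choose_pos (by omega)
  refine ⟨?_, by positivity⟩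
  rw [sum_congr rfl hsplit, sum_sub_distrib, ← mul_sum, ← mul_sum, halternating,
    sum_range_alternating_choose_div_eq_factorial,
    factorial_mul_factorial_div_factorial_eq_inv_choose, hml]
  field_simp
  ring

theorem inner_sum_positive (n l j k : ℕ) (hn : 0 < n) (hl : 0 < l) (h2l : 2 * l ≤ n)
    (hj1 : 1 ≤ j) (hjl : j ≤ l) (hk : k ≤ l - 1) :
    ∑ t ∈ Finset.range (l - k + 1),
        (-1 : ℝ) ^ t * ((((l : ℝ) - t - k) * (n + 1) - l * (l + 1)) / ((t : ℝ) + k + 1)) *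
          ((l - k).choose t) =
      ((n : ℝ) - l + 1) * (l + 1) / (k + 1) * (((l + 1).choose (k + 1) : ℝ))⁻¹ ∧
    0 < ((n : ℝ) - l + 1) * (l + 1) / (k + 1) * (((l + 1).choose (k + 1) : ℝ))⁻¹ :=
  inner_sum_positive_general n l k hl h2l hk
end

section
/- Let μ be a probability measure on subsets of [n], let l ≤ n/2, and define Z^i_{j,k} = ∑ {μ(X)μ(Y) : |X| = j, |Y| = k, |X ∩ Y| = i}. Then ∑_{i=0}^l β_i Z^i_{l,l} ≥ 0, where β_i = (i(n+1) − l(l+1))/(l − i + 1). -/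
open Finset

/-- `Z^i_{j,k}(μ) = ∑ {μ(X)μ(Y) : |X| = j, |Y| = k, |X ∩ Y| = i}`. -/
noncomputable def Zpair {n : ℕ} (μ : Finset (Fin n) → ℝ) (i j k : ℕ) : ℝ :=
  ∑ p ∈ (univ ×ˢ univ).filter
      (fun p : Finset (Fin n) × Finset (Fin n) =>
        p.1.card = j ∧ p.2.card = k ∧ (p.1 ∩ p.2).card = i),
    μ p.1 * μ p.2

/-!
From `∑_{j ≤ m} C(m,j) / C(N,j) = (N + 1) / (N - m + 1)` one gets, for `i ≤ l ≤ n`,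
`β_i = (n - l + 1) ∑_{j ≤ l} (C(i,j) / C(l,j) - C(l,j) / C(n,j))`. Hence the sum is a nonnegative
combination of the quadratic forms `∑_{|X| = |Y| = l} g(|X ∩ Y|) μ(X) μ(Y)` with kernels
`g(i) = C(i,j) / C(l,j) - C(l,j) / C(n,j)`. As `C(|X ∩ Y|, j)` counts the `j`-sets `T ⊆ X ∩ Y`,
the form with kernel `C(·, j)` is `∑_{|T| = j} A_T²`, where `A_T` is the mass of the `l`-sets
containing `T`; and `∑_T A_T = C(l,j) S` with `S` the mass of all `l`-sets. Cauchy–Schwarz over the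
`C(n,j)` sets `T` gives `C(l,j)² S² ≤ C(n,j) ∑_T A_T²`, i.e. each of these forms is nonnegative.
-/

theorem sum_choose_div_choose_add (m k : ℕ) :
    ∑ j ∈ range (m + 1), (m.choose j : ℝ) / (m + k).choose j = (m + k + 1) / (k + 1) := by
  have hpos : ∀ i ≤ m + k, ((m + k).choose i : ℝ) ≠ 0 :=
    fun i hi => Nat.cast_ne_zero.2 (Nat.choose_pos hi).ne'
  have hterm : ∀ j ∈ range (m + 1), (m.choose j : ℝ) / (m + k).choose j
      = (m - j + k).choose k / (m + k).choose k := by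
    intro j hj
    have hjm : j ≤ m := mem_range_succ_iff.1 hj
    have key : (m + k).choose k * m.choose j = (m + k).choose j * (m - j + k).choose k := by
      rw [← Nat.choose_symm_add, Nat.choose_mul hjm, show m + k - j = m - j + k by omega,
        Nat.choose_symm_add]
    rw [div_eq_div_iff (hpos j (by omega)) (hpos k (by omega))]
    exact_mod_cast (by linarith [key] :
      m.choose j * (m + k).choose k = (m - j + k).choose k * (m + k).choose j)
  have hockey : ∑ j ∈ range (m + 1), (m - j + k).choose k = (m + k + 1).choose (k + 1) := by
    rw [← sum_range_reflect, ← Nat.sum_range_add_choose]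
    refine sum_congr rfl fun j hj => ?_
    rw [show m - (m + 1 - 1 - j) = j by have := mem_range.mp hj; omega]
  have hsucc : ((m + k + 1 : ℕ) : ℝ) * (m + k).choose k
      = (m + k + 1).choose (k + 1) * (k + 1) := by
    exact_mod_cast Nat.add_one_mul_choose_eq (m + k) k
  rw [sum_congr rfl hterm, ← sum_div, div_eq_div_iff (hpos k (by omega)) (by positivity),
    ← Nat.cast_sum, hockey]
  push_cast at hsucc
  linarith

noncomputable def betaCoeff (n l i : ℕ) : ℝ :=
  ((i : ℝ) * (n + 1) - l * (l + 1)) / ((l : ℝ) - i + 1)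

theorem betaCoeff_eq_mul_sum {n l i : ℕ} (hil : i ≤ l) (hln : l ≤ n) :
    betaCoeff n l i = (n - l + 1) *
      ∑ j ∈ range (l + 1), ((i.choose j : ℝ) / l.choose j - l.choose j / n.choose j) := by
  obtain ⟨a, rfl⟩ := Nat.exists_eq_add_of_le hil
  obtain ⟨b, rfl⟩ := Nat.exists_eq_add_of_le hln
  have htrunc : ∑ j ∈ range (i + a + 1), (i.choose j : ℝ) / (i + a).choose j
      = ∑ j ∈ range (i + 1), (i.choose j : ℝ) / (i + a).choose j := by
    refine (sum_subset (range_subset_range.2 (by omega)) fun j _ hj => ?_).symm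
    rw [Nat.choose_eq_zero_of_lt (by simpa using hj), Nat.cast_zero, zero_div]
  rw [sum_sub_distrib, htrunc, sum_choose_div_choose_add, sum_choose_div_choose_add, betaCoeff]
  push_cast
  field_simp
  ring

section SetFamily

variable {α : Type*} [DecidableEq α] (F : Finset (Finset α)) (w : Finset α → ℝ)

def intersectionForm : (ℕ → ℝ) →ₗ[ℝ] ℝ where
  toFun g := ∑ X ∈ F, ∑ Y ∈ F, g #(X ∩ Y) * (w X * w Y)
  map_add' g g' := by simp only [Pi.add_apply, add_mul, sum_add_distrib]
  map_smul' c g := by simp only [Pi.smul_apply, smul_eq_mul, mul_assoc, mul_sum, RingHom.id_apply]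

theorem intersectionForm_apply (g : ℕ → ℝ) :
    intersectionForm F w g = ∑ X ∈ F, ∑ Y ∈ F, g #(X ∩ Y) * (w X * w Y) := rfl

theorem intersectionForm_one : intersectionForm F w 1 = (∑ X ∈ F, w X) ^ 2 := by
  simp only [intersectionForm_apply, Pi.one_apply, one_mul, sq, sum_mul_sum]

def upperMass (T : Finset α) : ℝ :=
  ∑ X ∈ F with T ⊆ X, w X

variable [Fintype α]

theorem filter_subset_powersetCard_univ (j : ℕ) (S : Finset α) :
    {T ∈ powersetCard j (univ : Finset α) | T ⊆ S} = powersetCard j S := by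
  ext T
  simp only [mem_filter, mem_powersetCard, subset_univ, true_and]
  tauto

theorem sum_powersetCard_ite_subset (j : ℕ) (S : Finset α) (c : ℝ) :
    ∑ T ∈ powersetCard j univ, (if T ⊆ S then c else 0) = (#S).choose j * c := by
  rw [← sum_filter, filter_subset_powersetCard_univ, sum_const, card_powersetCard, nsmul_eq_mul]

theorem sum_powersetCard_upperMass (j : ℕ) :
    ∑ T ∈ powersetCard j univ, upperMass F w T = ∑ X ∈ F, ((#X).choose j : ℝ) * w X := by
  simp only [upperMass, sum_filter]
  rw [sum_comm]
  exact sum_congr rfl fun X _ => sum_powersetCard_ite_subset j X (w X)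

theorem intersectionForm_choose (j : ℕ) :
    intersectionForm F w (fun i => (i.choose j : ℝ))
      = ∑ T ∈ powersetCard j univ, upperMass F w T ^ 2 := by
  simp only [upperMass, sq, sum_mul_sum, sum_filter, ite_mul, mul_ite, zero_mul, mul_zero,
    ← ite_and]
  rw [sum_comm]
  refine sum_congr rfl fun X _ => ?_
  rw [sum_comm]
  refine sum_congr rfl fun Y _ => ?_
  simp only [and_comm (a := _ ⊆ Y), ← subset_inter_iff]
  exact (sum_powersetCard_ite_subset j _ _).symm

variable {F} {l : ℕ}

theorem choose_sq_mul_intersectionForm_one_le (hF : ∀ X ∈ F, #X = l) (j : ℕ) :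
    (l.choose j : ℝ) ^ 2 * intersectionForm F w 1
      ≤ (Fintype.card α).choose j * intersectionForm F w (fun i => (i.choose j : ℝ)) := by
  have hsum : ∑ T ∈ powersetCard j univ, upperMass F w T = l.choose j * ∑ X ∈ F, w X := by
    rw [sum_powersetCard_upperMass, mul_sum]
    exact sum_congr rfl fun X hX => by rw [hF X hX]
  have hCS := sq_sum_le_card_mul_sum_sq (s := powersetCard j univ) (f := upperMass F w)
  rw [hsum, card_powersetCard, card_univ, mul_pow] at hCS
  rwa [intersectionForm_one, intersectionForm_choose]

theorem intersectionForm_choose_div_sub_nonneg (hF : ∀ X ∈ F, #X = l) {j : ℕ} (hjl : j ≤ l)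
    (hl : l ≤ Fintype.card α) :
    0 ≤ intersectionForm F w
      (fun i => (i.choose j : ℝ) / l.choose j - l.choose j / (Fintype.card α).choose j) := by
  have hlj : (0 : ℝ) < l.choose j := Nat.cast_pos.2 (Nat.choose_pos hjl)
  have hnj : (0 : ℝ) < (Fintype.card α).choose j :=
    Nat.cast_pos.2 (Nat.choose_pos (hjl.trans hl))
  have hlin :
      (fun i : ℕ => (i.choose j : ℝ) / l.choose j - l.choose j / (Fintype.card α).choose j)
      = (l.choose j : ℝ)⁻¹ • (fun i : ℕ => (i.choose j : ℝ))
        - ((l.choose j : ℝ) / (Fintype.card α).choose j) • 1 := by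
    funext i
    simp [div_eq_inv_mul]
  rw [hlin, map_sub, map_smul, map_smul, smul_eq_mul, smul_eq_mul, sub_nonneg,
    div_mul_eq_mul_div, div_le_iff₀ hnj, inv_mul_eq_div, div_mul_eq_mul_div, le_div_iff₀ hlj]
  nlinarith [choose_sq_mul_intersectionForm_one_le w hF j]

end SetFamily

theorem sum_mul_Zpair_eq_intersectionForm {n : ℕ} (μ : Finset (Fin n) → ℝ) (l : ℕ)
    (g : ℕ → ℝ) :
    ∑ i ∈ range (l + 1), g i * Zpair μ i l l = intersectionForm (powersetCard l univ) μ g := by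
  have hfiber : ∀ i, (univ ×ˢ univ).filter (fun p : Finset (Fin n) × Finset (Fin n) =>
        #p.1 = l ∧ #p.2 = l ∧ #(p.1 ∩ p.2) = i)
      = (powersetCard l univ ×ˢ powersetCard l univ).filter (fun p => #(p.1 ∩ p.2) = i) := by
    intro i
    ext p
    simp only [mem_filter, mem_product, mem_univ, mem_powersetCard_univ, true_and, and_assoc]
  have hmaps : ∀ p ∈ powersetCard l (univ : Finset (Fin n)) ×ˢ powersetCard l univ,
      #(p.1 ∩ p.2) ∈ range (l + 1) := by
    intro p hp
    rw [mem_product, mem_powersetCard_univ] at hp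
    exact mem_range_succ_iff.2 (hp.1 ▸ card_le_card inter_subset_left)
  rw [intersectionForm_apply, ← sum_product', ← sum_fiberwise_of_maps_to hmaps]
  refine sum_congr rfl fun i _ => ?_
  rw [Zpair, hfiber, mul_sum]
  exact sum_congr rfl fun p hp => by rw [(mem_filter.mp hp).2]

theorem beta_Z_sum_nonneg_general {n : ℕ} (l : ℕ) (h2l : 2 * l ≤ n)
    (μ : Finset (Fin n) → ℝ) :
    0 ≤ ∑ i ∈ Finset.range (l + 1),
        (((i : ℝ) * (n + 1) - l * (l + 1)) / ((l : ℝ) - i + 1)) * Zpair μ i l l := by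
  have hln : l ≤ n := by omega
  change 0 ≤ ∑ i ∈ range (l + 1), betaCoeff n l i * Zpair μ i l l
  rw [sum_congr rfl fun i hi => by rw [betaCoeff_eq_mul_sum (mem_range_succ_iff.1 hi) hln],
    sum_mul_Zpair_eq_intersectionForm]
  have hlin : (fun i : ℕ => ((n : ℝ) - l + 1) *
        ∑ j ∈ range (l + 1), ((i.choose j : ℝ) / l.choose j - l.choose j / n.choose j))
      = ((n : ℝ) - l + 1) • ∑ j ∈ range (l + 1),
        fun i : ℕ => (i.choose j : ℝ) / l.choose j - l.choose j / n.choose j := by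
    funext i
    simp only [Pi.smul_apply, smul_eq_mul, Finset.sum_apply]
  rw [hlin, map_smul, map_sum, smul_eq_mul]
  refine mul_nonneg (by linarith [(Nat.cast_le (α := ℝ)).2 hln]) (sum_nonneg fun j hj => ?_)
  have hF : ∀ X ∈ powersetCard l (univ : Finset (Fin n)), #X = l :=
    fun X => mem_powersetCard_univ.1
  simpa only [Fintype.card_fin] using intersectionForm_choose_div_sub_nonneg μ hF
    (mem_range_succ_iff.1 hj) (by rwa [Fintype.card_fin])

theorem beta_Z_sum_nonneg {n : ℕ} (l : ℕ) (h2l : 2 * l ≤ n)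
    (μ : Finset (Fin n) → ℝ) (hpos : ∀ X, 0 ≤ μ X) (hsum : ∑ X : Finset (Fin n), μ X = 1) :
    0 ≤ ∑ i ∈ Finset.range (l + 1),
        (((i : ℝ) * (n + 1) - l * (l + 1)) / ((l : ℝ) - i + 1)) * Zpair μ i l l :=
  beta_Z_sum_nonneg_general l h2l μ
end

section
/- Suppose μ is a probability measure on {0,1}^n such that for every k ∈ [t], every measure obtained from μ by conditioning on the values of n − 2k coordinates has the antipodal pairs property. Then the sequences (μ(|η|=i)/C(n,i))_{i=0}^{t+1} and (μ(|η|=i)/C(n,i))_{i=n−t−1}^{n} are log-concave. -/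
open Finset

/-- Number of ones of `η ∈ {0,1}^n`. -/
def wt {n : ℕ} (η : Fin n → Bool) : ℕ := (univ.filter fun i => η i = true).card

/-- Total mass of the event that `η` agrees with `ξ` on the coordinates in `I`. -/
noncomputable def condZ {n : ℕ} (μ : (Fin n → Bool) → ℝ) (I : Finset (Fin n))
    (ξ : Fin n → Bool) : ℝ :=
  ∑ η ∈ univ.filter (fun η : Fin n → Bool => ∀ i ∈ I, η i = ξ i), μ η

/-- Flip all coordinates outside `I` (antipode in the conditioned cube). -/
def flipOutside {n : ℕ} (I : Finset (Fin n)) (η : Fin n → Bool) : Fin n → Bool :=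
  fun i => if i ∈ I then η i else !η i

/-- `γ_j` of the measure obtained from `μ` by conditioning on the values `ξ` of the
coordinates in `I`, regarded as a measure on the remaining `n - |I|` coordinates. -/
noncomputable def condGamma {n : ℕ} (μ : (Fin n → Bool) → ℝ) (I : Finset (Fin n))
    (ξ : Fin n → Bool) (j : ℕ) : ℝ :=
  (((n - I.card).choose j : ℝ))⁻¹ *
    ∑ η ∈ univ.filter (fun η : Fin n → Bool =>
        (∀ i ∈ I, η i = ξ i) ∧ (univ.filter fun i => i ∉ I ∧ η i = true).card = j),
      (μ η / condZ μ I ξ) * (μ (flipOutside I η) / condZ μ I ξ)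

/-- Rank sequence of `μ`. -/
noncomputable def rankSeq {n : ℕ} (μ : (Fin n → Bool) → ℝ) (i : ℕ) : ℝ :=
  ∑ η ∈ univ.filter (fun η : Fin n → Bool => wt η = i), μ η

/-!
Pair a configuration `η` of weight `i - 1` with a configuration `ζ` of weight `i + 1` through the
set `I` on which they agree: `ζ` is `η` flipped off `I`, and in the subcube of dimension
`2k = n - #I` obtained by conditioning on the values of `η` on `I` the two form an antipodal pair
of ranks `k - 1` and `k + 1`. As `C(2k, k - 1) / C(2k, k) = k / (k + 1)`, the antipodal pairs
property of that conditional measure trades these pairs for antipodal pairs of rank `k`, weighted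
by `k / (k + 1)`. Summing over `I` again gives `r(i-1) r(i+1) ≤ ∑ d / (d + 1) μ(A) μ(B)` over pairs
of `i`-sets, where `d = #(A \ B)`. On the slice of `i`-sets this kernel has constant row sums and
equals `1 - 1 / (d + 1)`, where `1 / (d + 1) = ∫₀¹ s ^ d ds` is a positive semidefinite kernel; so
the quadratic form is at most the average row sum times `r(i) ^ 2`, and that average is
`i (n - i) / ((i + 1) (n - i + 1)) = C(n, i - 1) C(n, i + 1) / C(n, i) ^ 2`. The subcubes involved
have `k ≤ min i (n - i)`, which is where `i ≤ t` or `n - t ≤ i` enters.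
-/

lemma sum_mul_mul_le_of_sum_eq {ι : Type*} (s : Finset ι) (K : ι → ι → ℝ) (ρ : ℝ)
    (hrow : ∀ a ∈ s, ∑ b ∈ s, K a b = ρ) (hcol : ∀ b ∈ s, ∑ a ∈ s, K a b = ρ)
    (hK : ∀ v : ι → ℝ, ∑ a ∈ s, v a = 0 → ∑ a ∈ s, ∑ b ∈ s, K a b * (v a * v b) ≤ 0)
    (g : ι → ℝ) :
    ∑ a ∈ s, ∑ b ∈ s, K a b * (g a * g b) ≤ ρ / #s * (∑ a ∈ s, g a) ^ 2 := by
  rcases s.eq_empty_or_nonempty with rfl | hs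
  · simp
  set β := (∑ a ∈ s, g a) / #s
  set v : ι → ℝ := fun a => g a - β
  have hv : ∑ a ∈ s, v a = 0 := by
    simp only [v, sum_sub_distrib, sum_const, nsmul_eq_mul, β]
    field_simp
    ring
  have hlin : ∀ a ∈ s, ∑ b ∈ s, K a b * v a = ρ * v a := fun a ha => by
    rw [← sum_mul, hrow a ha]
  have hlin' : ∀ a ∈ s, ∑ b ∈ s, K b a * v a = ρ * v a := fun a ha => by
    rw [← sum_mul, hcol a ha]
  calc ∑ a ∈ s, ∑ b ∈ s, K a b * (g a * g b)
      = ∑ a ∈ s, ∑ b ∈ s, K a b * (v a * v b) + β * ∑ a ∈ s, ∑ b ∈ s, K a b * v a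
          + β * ∑ b ∈ s, ∑ a ∈ s, K a b * v b + β ^ 2 * ∑ a ∈ s, ∑ b ∈ s, K a b := by
        rw [sum_comm (s := s) (t := s) (f := fun b a => K a b * v b)]
        simp only [mul_sum, ← sum_add_distrib, v]
        refine sum_congr rfl fun a _ => sum_congr rfl fun b _ => ?_
        ring
    _ ≤ 0 + β * (ρ * ∑ a ∈ s, v a) + β * (ρ * ∑ a ∈ s, v a) + β ^ 2 * (#s * ρ) := by
        rw [sum_congr rfl hlin, sum_congr rfl hlin', sum_congr rfl hrow, ← mul_sum, sum_const,
          nsmul_eq_mul]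
        gcongr
        exact hK v hv
    _ = ρ / #s * (∑ a ∈ s, g a) ^ 2 := by
        rw [hv]
        simp only [β]
        field_simp
        ring

lemma sum_range_choose_mul_choose_add (i m k : ℕ) :
    ∑ d ∈ range (i + 1), i.choose d * m.choose (d + k) = (i + m).choose (i + k) := by
  calc ∑ d ∈ range (i + 1), i.choose d * m.choose (d + k)
      = ∑ j ∈ range (i + 1), i.choose j * m.choose (i + k - j) := by
        rw [← sum_range_reflect]
        refine sum_congr rfl fun j hj => ?_
        have hj := mem_range.mp hj
        rw [← Nat.choose_symm (by omega : i + 1 - 1 - j ≤ i)]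
        congr 2 <;> omega
    _ = ∑ j ∈ range (i + k + 1), i.choose j * m.choose (i + k - j) := by
        refine sum_subset (range_subset_range.mpr (by omega)) fun j _ hj => ?_
        rw [Nat.choose_eq_zero_of_lt (by simpa using hj), zero_mul]
    _ = (i + m).choose (i + k) := by
        rw [Nat.add_choose_eq, Finset.Nat.sum_antidiagonal_eq_sum_range_succ_mk]

lemma sum_range_choose_mul_choose_mul_div (i m : ℕ) :
    ∑ d ∈ range (i + 1), (i.choose d * m.choose d : ℕ) * ((d : ℝ) / (d + 1)) =
      i * m / ((i + 1) * (m + 1)) * (i + m).choose i := by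
  have hterm : ∀ d, ((i.choose d * m.choose d : ℕ) : ℝ) * (d / (d + 1)) =
      (i.choose d * m.choose d : ℕ) - (i.choose d * (m + 1).choose (d + 1) : ℕ) / (m + 1) := by
    intro d
    have h : (m + 1 : ℝ) * m.choose d = (m + 1).choose (d + 1) * (d + 1) := by
      exact_mod_cast Nat.add_one_mul_choose_eq m d
    push_cast
    field_simp
    linear_combination -(i.choose d : ℝ) * h
  have hV₀ := sum_range_choose_mul_choose_add i m 0
  have hV₁ := sum_range_choose_mul_choose_add i (m + 1) 1
  have hpascal : ((i + m + 1 : ℕ) : ℝ) * (i + m).choose i =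
      (i + m + 1).choose (i + 1) * (i + 1) := by
    exact_mod_cast Nat.add_one_mul_choose_eq (i + m) i
  simp only [add_zero, ← add_assoc] at hV₀ hV₁
  simp only [hterm, sum_sub_distrib, ← sum_div, ← Nat.cast_sum, hV₀, hV₁]
  push_cast at hpascal ⊢
  field_simp
  linear_combination hpascal

section Johnson

variable {α : Type*} [DecidableEq α]

lemma pow_card_sdiff_eq_sum_powerset {R : Type*} [CommRing R] (s : R) (A B : Finset α) :
    s ^ #(A \ B) = ∑ S ∈ (A ∩ B).powerset, (1 - s) ^ #S * s ^ (#A - #S) := by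
  have hsplit := card_sdiff_add_card_inter A B
  calc s ^ #(A \ B) = s ^ #(A \ B) * (1 - s + s) ^ #(A ∩ B) := by simp
    _ = _ := by
      rw [← sum_pow_mul_eq_add_pow, mul_sum]
      refine sum_congr rfl fun S hS => ?_
      have := card_le_card (mem_powerset.mp hS)
      rw [mul_left_comm, ← pow_add]
      congr 3
      omega

variable [Fintype α]

lemma sum_sum_pow_card_sdiff_mul_nonneg {𝒜 : Finset (Finset α)} {i : ℕ}
    (h𝒜 : ∀ A ∈ 𝒜, #A = i) {s : ℝ} (hs₀ : 0 ≤ s) (hs₁ : s ≤ 1) (v : Finset α → ℝ) :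
    0 ≤ ∑ A ∈ 𝒜, ∑ B ∈ 𝒜, s ^ #(A \ B) * (v A * v B) := by
  set w : Finset α → ℝ := fun S => (1 - s) ^ #S * s ^ (i - #S)
  calc (0 : ℝ) ≤ ∑ S, w S * (∑ A ∈ 𝒜 with S ⊆ A, v A) ^ 2 :=
        sum_nonneg fun S _ => mul_nonneg (by positivity) (sq_nonneg _)
    _ = ∑ S, ∑ A ∈ 𝒜, ∑ B ∈ 𝒜, if S ⊆ A ∩ B then w S * (v A * v B) else 0 := by
        refine sum_congr rfl fun S _ => ?_
        rw [sq, sum_mul_sum, mul_sum, sum_filter]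
        refine sum_congr rfl fun A _ => ?_
        rw [mul_sum, sum_filter]
        by_cases hA : S ⊆ A <;> simp [hA, subset_inter_iff]
    _ = ∑ A ∈ 𝒜, ∑ B ∈ 𝒜, s ^ #(A \ B) * (v A * v B) := by
        rw [sum_comm]
        refine sum_congr rfl fun A hA => ?_
        rw [sum_comm]
        refine sum_congr rfl fun B _ => ?_
        rw [pow_card_sdiff_eq_sum_powerset, h𝒜 A hA, sum_mul, ← sum_filter]
        congr 1
        ext S
        simp only [mem_filter, mem_powerset, mem_univ, true_and]

lemma sum_sum_mul_div_card_sdiff_add_one_nonneg {𝒜 : Finset (Finset α)} {i : ℕ}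
    (h𝒜 : ∀ A ∈ 𝒜, #A = i) (v : Finset α → ℝ) :
    0 ≤ ∑ A ∈ 𝒜, ∑ B ∈ 𝒜, v A * v B / (#(A \ B) + 1) := by
  have hint : ∀ A B : Finset α,
      v A * v B / (#(A \ B) + 1) = ∫ s in (0 : ℝ)..1, s ^ #(A \ B) * (v A * v B) := by
    intro A B
    rw [intervalIntegral.integral_mul_const, integral_pow]
    ring
  have hcont : ∀ A B : Finset α, Continuous fun s : ℝ => s ^ #(A \ B) * (v A * v B) :=
    fun A B => by fun_prop
  simp only [hint]
  simp_rw [← intervalIntegral.integral_finsetSum fun B _ => (hcont _ B).intervalIntegrable 0 1]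
  rw [← intervalIntegral.integral_finsetSum (f := fun A s => ∑ B ∈ 𝒜, s ^ #(A \ B) * (v A * v B))
    fun A _ => (continuous_finsetSum _ fun B _ => hcont A B).intervalIntegrable 0 1]
  exact intervalIntegral.integral_nonneg zero_le_one fun s hs =>
    sum_sum_pow_card_sdiff_mul_nonneg h𝒜 hs.1 hs.2 v

lemma card_filter_card_sdiff_eq {A : Finset α} {i : ℕ} (hA : #A = i) (d : ℕ) :
    #{B ∈ powersetCard i univ | #(A \ B) = d} = i.choose d * (Fintype.card α - i).choose d := by
  subst hA
  rw [← card_compl, ← card_powersetCard d A, ← card_powersetCard d Aᶜ, ← card_product]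
  have hXY : ∀ X Y : Finset α, X ⊆ A → Y ⊆ Aᶜ → A \ (A \ X ∪ Y) = X ∧ (A \ X ∪ Y) \ A = Y := by
    intro X Y hX hY
    constructor <;> ext a <;> grind [mem_compl]
  refine card_bij' (fun B _ => (A \ B, B \ A)) (fun XY _ => (A \ XY.1) ∪ XY.2) ?_ ?_ ?_ ?_
  · intro B hB
    simp only [mem_filter, mem_powersetCard, subset_univ, true_and] at hB
    simp only [mem_product, mem_powersetCard]
    exact ⟨⟨sdiff_subset, hB.2⟩, ⟨fun a => by simp +contextual, card_sdiff_comm hB.1 ▸ hB.2⟩⟩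
  · rintro ⟨X, Y⟩ h
    simp only [mem_product, mem_powersetCard] at h
    obtain ⟨⟨hXA, hX⟩, ⟨hYA, hY⟩⟩ := h
    simp only [mem_filter, mem_powersetCard, subset_univ, true_and]
    refine ⟨?_, by rw [(hXY X Y hXA hYA).1, hX]⟩
    have hdisj : Disjoint (A \ X) Y :=
      disjoint_of_subset_left sdiff_subset (subset_compl_iff_disjoint_left.mp hYA)
    rw [card_union_of_disjoint hdisj, card_sdiff_of_subset hXA, hX, hY]
    have := hX ▸ card_le_card hXA
    omega
  · intro B _
    ext a; simp only [mem_union, mem_sdiff]; tauto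
  · rintro ⟨X, Y⟩ h
    simp only [mem_product, mem_powersetCard] at h
    exact Prod.ext (hXY X Y h.1.1 h.2.1).1 (hXY X Y h.1.1 h.2.1).2


lemma sum_powersetCard_card_sdiff {A : Finset α} {i : ℕ} (hA : #A = i) (f : ℕ → ℝ) :
    ∑ B ∈ powersetCard i univ, f #(A \ B) =
      ∑ d ∈ range (i + 1), (i.choose d * (Fintype.card α - i).choose d : ℕ) * f d := by
  rw [← sum_fiberwise_of_maps_to (t := range (i + 1)) (g := fun B => #(A \ B))
    fun B _ => mem_range_succ_iff.mpr (hA ▸ card_le_card sdiff_subset)]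
  refine sum_congr rfl fun d _ => ?_
  rw [sum_congr rfl fun B hB => by rw [(mem_filter.mp hB).2], sum_const, nsmul_eq_mul,
    card_filter_card_sdiff_eq hA]

theorem sum_sum_card_sdiff_div_mul_le {i : ℕ} (hi : i ≤ Fintype.card α) (g : Finset α → ℝ) :
    ∑ A ∈ powersetCard i univ, ∑ B ∈ powersetCard i univ,
        (#(A \ B) / (#(A \ B) + 1) : ℝ) * (g A * g B) ≤
      i * (Fintype.card α - i : ℕ) / ((i + 1) * ((Fintype.card α - i : ℕ) + 1)) *
        (∑ A ∈ powersetCard i univ, g A) ^ 2 := by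
  set P := powersetCard i (univ : Finset α)
  have hP : (#P : ℝ) = (Fintype.card α).choose i := by simp [P, card_powersetCard]
  have hrow : ∀ A ∈ P, ∑ B ∈ P, (#(A \ B) / (#(A \ B) + 1) : ℝ) =
      i * (Fintype.card α - i : ℕ) / ((i + 1) * ((Fintype.card α - i : ℕ) + 1)) * #P := by
    intro A hA
    rw [sum_powersetCard_card_sdiff (mem_powersetCard.mp hA).2 fun d => (d / (d + 1) : ℝ),
      sum_range_choose_mul_choose_mul_div, Nat.add_sub_cancel' hi, hP]
  have hcol : ∀ B ∈ P, ∑ A ∈ P, (#(A \ B) / (#(A \ B) + 1) : ℝ) =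
      i * (Fintype.card α - i : ℕ) / ((i + 1) * ((Fintype.card α - i : ℕ) + 1)) * #P := by
    intro B hB
    rw [← hrow B hB]
    refine sum_congr rfl fun A hA => ?_
    rw [card_sdiff_comm ((mem_powersetCard.mp hA).2.trans (mem_powersetCard.mp hB).2.symm)]
  have hK : ∀ v : Finset α → ℝ, ∑ A ∈ P, v A = 0 →
      ∑ A ∈ P, ∑ B ∈ P, (#(A \ B) / (#(A \ B) + 1) : ℝ) * (v A * v B) ≤ 0 := by
    intro v hv
    have hsplit : ∀ A B : Finset α, (#(A \ B) / (#(A \ B) + 1) : ℝ) * (v A * v B) =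
        v A * v B - v A * v B / (#(A \ B) + 1) := fun A B => by field_simp; ring
    simp only [hsplit, sum_sub_distrib, ← mul_sum, ← sum_mul, hv, zero_mul, zero_sub,
      neg_nonpos]
    exact sum_sum_mul_div_card_sdiff_add_one_nonneg (fun A hA => (mem_powersetCard.mp hA).2) v
  have hPpos : (0 : ℝ) < #P := hP ▸ Nat.cast_pos.mpr (Nat.choose_pos hi)
  have := sum_mul_mul_le_of_sum_eq P _ _ hrow hcol hK g
  rwa [mul_div_cancel_right₀ _ hPpos.ne'] at this

end Johnson

def onesEquiv {α : Type*} [Fintype α] [DecidableEq α] : (α → Bool) ≃ Finset α where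
  toFun η := {a | η a = true}
  invFun A a := decide (a ∈ A)
  left_inv η := by ext; simp
  right_inv A := by ext; simp

lemma sum_card_onesEquiv_eq {α M : Type*} [Fintype α] [DecidableEq α] [AddCommMonoid M]
    (i : ℕ) (f : (α → Bool) → M) :
    ∑ η with #(onesEquiv η) = i, f η = ∑ A ∈ powersetCard i univ, f (onesEquiv.symm A) :=
  sum_equiv onesEquiv (by simp [mem_powersetCard]) (by simp)

section Cube
variable {n : ℕ}

def onesInside (I : Finset (Fin n)) (η : Fin n → Bool) : ℕ := #{j | j ∈ I ∧ η j = true}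

def onesOutside (I : Finset (Fin n)) (η : Fin n → Bool) : ℕ := #{j | j ∉ I ∧ η j = true}

def agreeSet (η ζ : Fin n → Bool) : Finset (Fin n) := {j | η j = ζ j}

def cylinder (I : Finset (Fin n)) (ξ : Fin n → Bool) : Finset (Fin n → Bool) :=
  {η | ∀ j ∈ I, η j = ξ j}

lemma wt_eq_onesInside_add_onesOutside (I : Finset (Fin n)) (η : Fin n → Bool) :
    wt η = onesInside I η + onesOutside I η := by
  rw [wt, onesInside, onesOutside, ← card_union_of_disjoint]
  · congr 1; ext j; by_cases j ∈ I <;> simp [*]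
  · exact disjoint_filter.mpr fun _ _ h₁ h₂ => h₂.1 h₁.1

lemma onesInside_congr {I : Finset (Fin n)} {η ξ : Fin n → Bool} (h : ∀ j ∈ I, η j = ξ j) :
    onesInside I η = onesInside I ξ := by
  unfold onesInside
  congr 1
  ext j
  simp +contextual [h]

lemma wt_eq_of_mem_cylinder {I : Finset (Fin n)} {ξ η : Fin n → Bool} (h : η ∈ cylinder I ξ) :
    wt η = onesInside I ξ + onesOutside I η := by
  rw [wt_eq_onesInside_add_onesOutside I, onesInside_congr (mem_filter.mp h).2]

lemma flipOutside_mem_cylinder {I : Finset (Fin n)} {ξ η : Fin n → Bool}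
    (h : η ∈ cylinder I ξ) : flipOutside I η ∈ cylinder I ξ :=
  mem_filter.mpr ⟨mem_univ _, fun j hj => (if_pos hj).trans ((mem_filter.mp h).2 j hj)⟩

lemma onesInside_le_card (I : Finset (Fin n)) (η : Fin n → Bool) : onesInside I η ≤ #I :=
  card_le_card fun _ hj => (mem_filter.mp hj).2.1

lemma onesOutside_add_onesOutside_flipOutside (I : Finset (Fin n)) (η : Fin n → Bool) :
    onesOutside I η + onesOutside I (flipOutside I η) + #I = n := by
  have hflip : onesOutside I (flipOutside I η) = #{j | j ∉ I ∧ η j = false} := by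
    unfold onesOutside; congr 1; ext j; by_cases j ∈ I <;> simp [flipOutside, *]
  have hIc : #{j | j ∉ I ∧ η j = true} + #{j | j ∉ I ∧ η j = false} = #Iᶜ := by
    rw [← card_union_of_disjoint (disjoint_filter.mpr fun _ _ h₁ h₂ => by simp_all)]
    congr 1; ext j; cases h : η j <;> simp [h]
  rw [hflip, onesOutside, hIc, card_compl, Fintype.card_fin]
  have := card_le_univ I
  simp only [Fintype.card_fin] at this
  omega

lemma agreeSet_flipOutside (I : Finset (Fin n)) (η : Fin n → Bool) :
    agreeSet η (flipOutside I η) = I := by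
  ext j; by_cases j ∈ I <;> simp [agreeSet, flipOutside, *]

lemma flipOutside_agreeSet (η ζ : Fin n → Bool) : flipOutside (agreeSet η ζ) η = ζ := by
  funext j
  by_cases h : η j = ζ j
  · simp [agreeSet, flipOutside, h]
  · cases hη : η j <;> cases hζ : ζ j <;> simp_all [agreeSet, flipOutside]

lemma card_onesEquiv_sdiff_onesEquiv_flipOutside (I : Finset (Fin n)) (η : Fin n → Bool) :
    #(onesEquiv η \ onesEquiv (flipOutside I η)) = onesOutside I η := by
  unfold onesOutside
  congr 1; ext j; by_cases j ∈ I <;> simp [onesEquiv, flipOutside, *]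

lemma sum_sum_eq_sum_sum_flipOutside {M : Type*} [AddCommMonoid M]
    (f : (Fin n → Bool) → (Fin n → Bool) → M) :
    ∑ η, ∑ ζ, f η ζ = ∑ I, ∑ η, f η (flipOutside I η) := by
  rw [sum_comm (s := univ (α := Finset (Fin n)))]
  refine sum_congr rfl fun η _ => ?_
  exact (Fintype.sum_bijective (fun I => flipOutside I η)
    (Function.bijective_iff_has_inverse.mpr ⟨agreeSet η, fun I => agreeSet_flipOutside I η,
      flipOutside_agreeSet η⟩) _ _ fun _ => rfl).symm

def LocalAPP (μ : (Fin n → Bool) → ℝ) (t : ℕ) : Prop :=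
  ∀ k, 1 ≤ k → k ≤ t → 2 * k ≤ n →
    ∀ I : Finset (Fin n), I.card = n - 2 * k → ∀ ξ : Fin n → Bool,
      0 < condZ μ I ξ → condGamma μ I ξ (k - 1) ≤ condGamma μ I ξ k

noncomputable def antipodalMass (μ : (Fin n → Bool) → ℝ) (I : Finset (Fin n))
    (ξ : Fin n → Bool) (j : ℕ) : ℝ :=
  ∑ η ∈ cylinder I ξ with onesOutside I η = j, μ η * μ (flipOutside I η)

lemma antipodalMass_eq_sum_cylinder (μ : (Fin n → Bool) → ℝ) (I : Finset (Fin n))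
    (ξ : Fin n → Bool) (j : ℕ) :
    antipodalMass μ I ξ j =
      ∑ η ∈ cylinder I ξ, if onesOutside I η = j then μ η * μ (flipOutside I η) else 0 :=
  sum_filter _ _

lemma condGamma_eq (μ : (Fin n → Bool) → ℝ) (I : Finset (Fin n)) (ξ : Fin n → Bool) (j : ℕ) :
    condGamma μ I ξ j = ((n - #I).choose j : ℝ)⁻¹ * (antipodalMass μ I ξ j / condZ μ I ξ ^ 2) := by
  rw [condGamma, antipodalMass, cylinder, filter_filter, sum_div]
  congr 1
  exact sum_congr rfl fun η _ => by ring

lemma antipodalMass_eq_zero_of_condZ_eq_zero {μ : (Fin n → Bool) → ℝ} (hpos : ∀ η, 0 ≤ μ η)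
    {I : Finset (Fin n)} {ξ : Fin n → Bool} (hZ : condZ μ I ξ = 0) (j : ℕ) :
    antipodalMass μ I ξ j = 0 := by
  have hzero := (sum_eq_zero_iff_of_nonneg fun η _ => hpos η).mp hZ
  refine sum_eq_zero fun η hη => ?_
  rw [hzero η (mem_filter.mp hη).1, zero_mul]

lemma add_one_mul_antipodalMass_le {μ : (Fin n → Bool) → ℝ} (hpos : ∀ η, 0 ≤ μ η)
    {I : Finset (Fin n)} {ξ : Fin n → Bool} {k : ℕ} (hk : 1 ≤ k) (hI : n - #I = 2 * k)
    (hγ : 0 < condZ μ I ξ → condGamma μ I ξ (k - 1) ≤ condGamma μ I ξ k) :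
    (k + 1) * antipodalMass μ I ξ (k - 1) ≤ k * antipodalMass μ I ξ k := by
  rcases (show 0 ≤ condZ μ I ξ from sum_nonneg fun η _ => hpos η).eq_or_lt with hZ | hZ
  · simp [antipodalMass_eq_zero_of_condZ_eq_zero hpos hZ.symm]
  have hγ' := hγ hZ
  have hc₁ : (0 : ℝ) < (2 * k).choose (k - 1) := Nat.cast_pos.mpr (Nat.choose_pos (by omega))
  have hc₂ : (0 : ℝ) < (2 * k).choose k := Nat.cast_pos.mpr (Nat.choose_pos (by omega))
  rw [condGamma_eq, condGamma_eq, hI, ← div_eq_inv_mul, ← div_eq_inv_mul, div_div, div_div,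
    div_le_div_iff₀ (by positivity) (by positivity)] at hγ'
  have hbin : ((2 * k).choose k : ℝ) * k = (2 * k).choose (k - 1) * (k + 1) := by
    have h := Nat.choose_succ_right_eq (2 * k) (k - 1)
    rw [Nat.sub_add_cancel hk, (by omega : 2 * k - (k - 1) = k + 1)] at h
    exact_mod_cast h
  refine le_of_mul_le_mul_right ?_ (mul_pos hc₁ (pow_pos hZ 2))
  linear_combination (k : ℝ) * hγ' - antipodalMass μ I ξ (k - 1) * condZ μ I ξ ^ 2 * hbin

lemma sum_cylinder_antipodal_le {μ : (Fin n → Bool) → ℝ} (hpos : ∀ η, 0 ≤ μ η) {t i : ℕ}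
    (hAPP : LocalAPP μ t) (hi : 1 ≤ i) (hit : i ≤ t ∨ n - t ≤ i)
    (I : Finset (Fin n)) (ξ : Fin n → Bool) :
    ∑ η ∈ cylinder I ξ, (if wt η = i - 1 ∧ wt (flipOutside I η) = i + 1 then
          μ η * μ (flipOutside I η) else 0) ≤
      ∑ η ∈ cylinder I ξ, (if wt η = i ∧ wt (flipOutside I η) = i then
          (onesOutside I η / (onesOutside I η + 1) : ℝ) * (μ η * μ (flipOutside I η)) else 0) := by
  have hwt : ∀ η ∈ cylinder I ξ, wt η = onesInside I ξ + onesOutside I η ∧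
      wt (flipOutside I η) = onesInside I ξ + onesOutside I (flipOutside I η) ∧
      onesOutside I η + onesOutside I (flipOutside I η) + #I = n := fun η hη =>
    ⟨wt_eq_of_mem_cylinder hη, wt_eq_of_mem_cylinder (flipOutside_mem_cylinder hη),
      onesOutside_add_onesOutside_flipOutside I η⟩
  -- Both sums only see antipodal pairs of the `(n - #I)`-dimensional subcube, at ranks
  -- `k - 1, k + 1` on the left and `k, k` on the right, where `k = i - onesInside I ξ`.
  by_cases hk : ∃ k, 1 ≤ k ∧ #I + 2 * k = n ∧ onesInside I ξ + k = i
  · obtain ⟨k, hk1, hIk, hik⟩ := hk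
    have hkt : k ≤ t := by have := onesInside_le_card I ξ; omega
    have hstep := add_one_mul_antipodalMass_le hpos hk1 (by omega)
      (hAPP k hk1 hkt (by omega) I (by omega) ξ)
    calc _ = antipodalMass μ I ξ (k - 1) := by
          rw [antipodalMass_eq_sum_cylinder]
          refine sum_congr rfl fun η hη => if_congr ?_ rfl rfl
          have := hwt η hη
          omega
      _ ≤ k / (k + 1) * antipodalMass μ I ξ k := by
          rw [div_mul_eq_mul_div, le_div_iff₀ (by positivity)]
          linarith
      _ = _ := by
          rw [antipodalMass_eq_sum_cylinder, mul_sum]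
          refine sum_congr rfl fun η hη => ?_
          have := hwt η hη
          by_cases h : onesOutside I η = k
          · rw [if_pos h, if_pos (by omega), h]
          · rw [if_neg h, if_neg (by omega), mul_zero]
  · refine (sum_eq_zero fun η hη => if_neg fun hη' => hk ?_).trans_le
      (sum_nonneg fun η _ => ?_)
    · have := hwt η hη
      exact ⟨onesOutside I η + 1, by omega, by omega, by omega⟩
    · have := hpos η
      have := hpos (flipOutside I η)
      split_ifs <;> positivity

lemma sum_antipodal_le {μ : (Fin n → Bool) → ℝ} (hpos : ∀ η, 0 ≤ μ η) {t i : ℕ}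
    (hAPP : LocalAPP μ t) (hi : 1 ≤ i) (hit : i ≤ t ∨ n - t ≤ i) (I : Finset (Fin n)) :
    ∑ η, (if wt η = i - 1 ∧ wt (flipOutside I η) = i + 1 then
          μ η * μ (flipOutside I η) else 0) ≤
      ∑ η, (if wt η = i ∧ wt (flipOutside I η) = i then
          (onesOutside I η / (onesOutside I η + 1) : ℝ) * (μ η * μ (flipOutside I η)) else 0) := by
  rw [← sum_fiberwise univ I.restrict, ← sum_fiberwise univ I.restrict]
  refine sum_le_sum fun ρ _ => ?_
  obtain ⟨ξ, rfl⟩ : ∃ ξ : Fin n → Bool, I.restrict ξ = ρ :=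
    ⟨fun j => if h : j ∈ I then ρ ⟨j, h⟩ else false, by ext ⟨j, hj⟩; simp [hj]⟩
  have hfiber : univ.filter (fun η : Fin n → Bool => I.restrict η = I.restrict ξ) =
      cylinder I ξ := by
    ext η; simp [cylinder, funext_iff]
  rw [hfiber]
  exact sum_cylinder_antipodal_le hpos hAPP hi hit I ξ

lemma rankSeq_mul_rankSeq (μ : (Fin n → Bool) → ℝ) (a b : ℕ) :
    rankSeq μ a * rankSeq μ b =
      ∑ η, ∑ ζ, if wt η = a ∧ wt ζ = b then μ η * μ ζ else 0 := by
  simp only [rankSeq, sum_filter, sum_mul_sum, ite_zero_mul_ite_zero]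

lemma rankSeq_mul_rankSeq_le {μ : (Fin n → Bool) → ℝ} (hpos : ∀ η, 0 ≤ μ η) {t i : ℕ}
    (hAPP : LocalAPP μ t) (hi : 1 ≤ i) (hit : i ≤ t ∨ n - t ≤ i) :
    rankSeq μ (i - 1) * rankSeq μ (i + 1) ≤
      ∑ η, ∑ ζ, if wt η = i ∧ wt ζ = i then
        (#(onesEquiv η \ onesEquiv ζ) / (#(onesEquiv η \ onesEquiv ζ) + 1) : ℝ) * (μ η * μ ζ)
        else 0 := by
  rw [rankSeq_mul_rankSeq, sum_sum_eq_sum_sum_flipOutside, sum_sum_eq_sum_sum_flipOutside]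
  simp only [card_onesEquiv_sdiff_onesEquiv_flipOutside]
  exact sum_le_sum fun I _ => sum_antipodal_le hpos hAPP hi hit I

end Cube

lemma choose_pred_mul_choose_succ {n i : ℕ} (hi : 1 ≤ i) (hin : i ≤ n) :
    (n.choose (i - 1) * n.choose (i + 1) : ℝ) =
      i * (n - i : ℕ) / ((i + 1) * ((n - i : ℕ) + 1)) * n.choose i ^ 2 := by
  have h₁ : (n.choose i * i : ℝ) = n.choose (i - 1) * ((n - i : ℕ) + 1) := by
    have h := Nat.choose_succ_right_eq n (i - 1)
    rw [Nat.sub_add_cancel hi, (by omega : n - (i - 1) = n - i + 1)] at h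
    exact_mod_cast h
  have h₂ : (n.choose (i + 1) * (i + 1) : ℝ) = n.choose i * (n - i : ℕ) := by
    exact_mod_cast Nat.choose_succ_right_eq n i
  field_simp
  linear_combination (n.choose i * i : ℝ) * h₂ - (n.choose (i + 1) * (i + 1) : ℝ) * h₁

theorem rankSeq_mul_rankSeq_le_sq {n t i : ℕ} {μ : (Fin n → Bool) → ℝ} (hpos : ∀ η, 0 ≤ μ η)
    (hAPP : LocalAPP μ t) (hi : 1 ≤ i) (hin : i ≤ n) (hit : i ≤ t ∨ n - t ≤ i) :
    rankSeq μ (i - 1) * rankSeq μ (i + 1) ≤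
      i * (n - i : ℕ) / ((i + 1) * ((n - i : ℕ) + 1)) * rankSeq μ i ^ 2 := by
  have hwt : ∀ η : Fin n → Bool, wt η = #(onesEquiv η) := fun _ => rfl
  have hJ := sum_sum_card_sdiff_div_mul_le (α := Fin n) (by simpa using hin) (μ ∘ onesEquiv.symm)
  simp only [Fintype.card_fin, Function.comp_apply] at hJ
  calc _ ≤ _ := rankSeq_mul_rankSeq_le hpos hAPP hi hit
    _ = ∑ η with #(onesEquiv η) = i, ∑ ζ with #(onesEquiv ζ) = i,
          (#(onesEquiv η \ onesEquiv ζ) / (#(onesEquiv η \ onesEquiv ζ) + 1) : ℝ) *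
            (μ η * μ ζ) := by
        simp only [hwt, ite_and, sum_filter, sum_ite_irrel, sum_const_zero]
    _ ≤ _ := by simpa [sum_card_onesEquiv_eq] using hJ
    _ = _ := by rw [rankSeq]; simp only [hwt, sum_card_onesEquiv_eq]

theorem rankSeq_div_choose_mul_le_sq {n t i : ℕ} {μ : (Fin n → Bool) → ℝ}
    (hpos : ∀ η, 0 ≤ μ η) (hAPP : LocalAPP μ t) (hi : 1 ≤ i) (hin : i + 1 ≤ n)
    (hit : i ≤ t ∨ n - t ≤ i) :
    (rankSeq μ (i - 1) / (n.choose (i - 1) : ℝ)) * (rankSeq μ (i + 1) / (n.choose (i + 1) : ℝ)) ≤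
      (rankSeq μ i / (n.choose i : ℝ)) ^ 2 := by
  have hC : ∀ j ≤ n, (0 : ℝ) < n.choose j := fun j hj => Nat.cast_pos.mpr (Nat.choose_pos hj)
  have hR : (0 : ℝ) < i * (n - i : ℕ) / ((i + 1) * ((n - i : ℕ) + 1)) := by
    have : 0 < n - i := by omega
    positivity
  rw [div_mul_div_comm, div_pow, choose_pred_mul_choose_succ hi (by omega),
    div_le_div_iff₀ (mul_pos hR (pow_pos (hC i (by omega)) 2)) (pow_pos (hC i (by omega)) 2)]
  calc _ ≤ i * (n - i : ℕ) / ((i + 1) * ((n - i : ℕ) + 1)) * rankSeq μ i ^ 2 * n.choose i ^ 2 :=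
        mul_le_mul_of_nonneg_right (rankSeq_mul_rankSeq_le_sq hpos hAPP hi (by omega) hit)
          (by positivity)
    _ = _ := by ring

theorem capp_local_ulc_general {n t : ℕ} (μ : (Fin n → Bool) → ℝ)
    (hpos : ∀ η, 0 ≤ μ η)
    (hAPP : ∀ k, 1 ≤ k → k ≤ t → 2 * k ≤ n →
      ∀ I : Finset (Fin n), I.card = n - 2 * k → ∀ ξ : Fin n → Bool,
        0 < condZ μ I ξ → condGamma μ I ξ (k - 1) ≤ condGamma μ I ξ k) :
    (∀ i, 1 ≤ i → i ≤ t →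
      (rankSeq μ (i - 1) / (n.choose (i - 1) : ℝ)) *
          (rankSeq μ (i + 1) / (n.choose (i + 1) : ℝ)) ≤
        (rankSeq μ i / (n.choose i : ℝ)) ^ 2) ∧
    (∀ i, n - t ≤ i → i ≤ n - 1 → 1 ≤ i →
      (rankSeq μ (i - 1) / (n.choose (i - 1) : ℝ)) *
          (rankSeq μ (i + 1) / (n.choose (i + 1) : ℝ)) ≤
        (rankSeq μ i / (n.choose i : ℝ)) ^ 2) := by
  refine ⟨fun i hi hit => ?_, fun i hti hin hi =>
    rankSeq_div_choose_mul_le_sq hpos hAPP hi (by omega) (Or.inr hti)⟩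
  rcases lt_or_ge n (i + 1) with hn | hn
  · rw [Nat.choose_eq_zero_of_lt hn, Nat.cast_zero, div_zero, mul_zero]
    positivity
  · exact rankSeq_div_choose_mul_le_sq hpos hAPP hi hn (Or.inl hit)

theorem capp_local_ulc {n t : ℕ} (μ : (Fin n → Bool) → ℝ)
    (hpos : ∀ η, 0 ≤ μ η) (hsum : ∑ η : Fin n → Bool, μ η = 1)
    (hAPP : ∀ k, 1 ≤ k → k ≤ t → 2 * k ≤ n →
      ∀ I : Finset (Fin n), I.card = n - 2 * k → ∀ ξ : Fin n → Bool,
        0 < condZ μ I ξ → condGamma μ I ξ (k - 1) ≤ condGamma μ I ξ k) :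
    (∀ i, 1 ≤ i → i ≤ t →
      (rankSeq μ (i - 1) / (n.choose (i - 1) : ℝ)) *
          (rankSeq μ (i + 1) / (n.choose (i + 1) : ℝ)) ≤
        (rankSeq μ i / (n.choose i : ℝ)) ^ 2) ∧
    (∀ i, n - t ≤ i → i ≤ n - 1 → 1 ≤ i →
      (rankSeq μ (i - 1) / (n.choose (i - 1) : ℝ)) *
          (rankSeq μ (i + 1) / (n.choose (i + 1) : ℝ)) ≤
        (rankSeq μ i / (n.choose i : ℝ)) ^ 2) :=
  capp_local_ulc_general μ hpos hAPP
end
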